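/- arXiv:2310.14121 — 11 statements merged into one kernel-verified Lean document; each statement's English description precedes it below -/
import Mathlib

section
/- Consider an OSSP with positive costs and no self-transitions, and let U (with U(t) = 0) satisfy the dynamic-programming equations with attained minima at every non-target node. Fix δ ≥ 0 and suppose that for every non-target node x_i, every action a ∈ A_i with support I(a) = {z_1,…,z_m}, probabilities ξ_j = p(x_i,a,z_j) > 0, and every r ∈ {1,…,m}: C(x_i,a) ≥ Σ_{j ≠ r} ξ_j C_j + ξ_r δ, where C_j = C(x_i,e_j) is the cost of a deterministic action e_j ∈ A_i with p(x_i,e_j,z_j) = 1 (which exists by the OSSP property). Then for every non-target node x_i, every optimal action a (a minimizer of F_i(·,U)), and every z_r ∈ I(a), one has U(x_i) ≥ δ + U(z_r); for δ = 0 (using positivity of costs in the deterministic case) the OSSP is monotone causal, and for δ > 0 it is monotone δ-causal. -/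
open Finset

/-- Simplified monotone δ-causality condition in OSSPs.
Consider an OSSP with positive costs and no self-transitions, whose value vector
`U` (with `U t = 0`) satisfies the dynamic-programming equations with attained
minima.  Fix `δ ≥ 0`, and let `e x y` be a deterministic action of `A(x)`
transitioning to `y` (which exists for reachable `y` by the OSSP property).
If every action `a ∈ A(x)` with support `{z_1,…,z_m}` and probabilities `ξ_j`
satisfies `C(x,a) ≥ Σ_{j≠r} ξ_j C_j + ξ_r δ` for every `r` in the support, then
for every optimal action `a` and every `z_r` in its support `U(x) ≥ δ + U(z_r)`;
moreover there is an optimal action realizing strict inequality when `δ = 0`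
(monotone causality), so for `δ > 0` the OSSP is monotone δ-causal. -/
theorem stmt2 {V A : Type*} [Fintype V] [DecidableEq V]
    (t : V) (Ai : V → Set A) (C : V → A → ℝ) (p : V → A → V → ℝ)
    (U : V → ℝ) (δ : ℝ) (hδ : 0 ≤ δ)
    (hAne : ∀ x, x ≠ t → (Ai x).Nonempty)
    (hCpos : ∀ x, x ≠ t → ∀ a ∈ Ai x, 0 < C x a)
    (hp0 : ∀ x, x ≠ t → ∀ a ∈ Ai x, ∀ y, 0 ≤ p x a y)
    (hp1 : ∀ x, x ≠ t → ∀ a ∈ Ai x, ∑ y, p x a y = 1)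
    (hself : ∀ x, x ≠ t → ∀ a ∈ Ai x, p x a x = 0)
    -- OSSP property, with `e x y` a chosen deterministic action leading to `y`
    (e : V → V → A)
    (he : ∀ x, x ≠ t → ∀ y, (∃ a ∈ Ai x, 0 < p x a y) →
      e x y ∈ Ai x ∧ p x (e x y) y = 1)
    -- dynamic programming equations with attained minima
    (hUt : U t = 0)
    (hDP : ∀ x, x ≠ t →
      IsLeast {w : ℝ | ∃ a ∈ Ai x, w = C x a + ∑ y, p x a y * U y} (U x))
    -- the simplified monotone δ-causality condition
    (hcond : ∀ x, x ≠ t → ∀ a ∈ Ai x, ∀ r, 0 < p x a r →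
      (∑ y ∈ Finset.univ.erase r, p x a y * C x (e x y)) + p x a r * δ ≤ C x a) :
    (∀ x, x ≠ t → ∀ a ∈ Ai x,
      C x a + ∑ y, p x a y * U y = U x →
      ∀ r, 0 < p x a r → δ + U r ≤ U x) ∧
    (∀ x, x ≠ t → ∃ a ∈ Ai x,
      (C x a + ∑ y, p x a y * U y = U x) ∧
      ∀ r, 0 < p x a r → δ + U r ≤ U x ∧ (δ = 0 → U r < U x)) := by
  classical
  -- a deterministic action puts zero mass outside its target
  have hdet : ∀ x, x ≠ t → ∀ b ∈ Ai x, ∀ y, p x b y = 1 →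
      ∀ z, z ≠ y → p x b z = 0 := by
    intro x hx b hb y hy z hz
    have h1 := hp1 x hx b hb
    have hsplit : p x b y + ∑ w ∈ univ.erase y, p x b w = ∑ w, p x b w :=
      Finset.add_sum_erase univ (p x b) (Finset.mem_univ y)
    have hzero : ∑ w ∈ univ.erase y, p x b w = 0 := by
      rw [h1] at hsplit; linarith [hsplit, hy]
    have := (Finset.sum_eq_zero_iff_of_nonneg
      (fun w _ => hp0 x hx b hb w)).mp hzero z (Finset.mem_erase.mpr ⟨hz, Finset.mem_univ z⟩)
    exact this
  -- the value of a deterministic action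
  have hdval : ∀ x, x ≠ t → ∀ b ∈ Ai x, ∀ y, p x b y = 1 →
      ∑ z, p x b z * U z = U y := by
    intro x hx b hb y hy
    rw [Finset.sum_eq_single_of_mem y (Finset.mem_univ y)
      (fun z _ hz => by rw [hdet x hx b hb y hy z hz, zero_mul]), hy, one_mul]
  -- key: if y is reachable from x, then U x ≤ C x (e x y) + U y
  have key : ∀ x, x ≠ t → ∀ y, (∃ a ∈ Ai x, 0 < p x a y) →
      U x ≤ C x (e x y) + U y := by
    intro x hx y hy
    obtain ⟨heA, hep⟩ := he x hx y hy
    have := (hDP x hx).2 ⟨e x y, heA, rfl⟩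
    rwa [hdval x hx (e x y) heA y hep] at this
  -- Part 1
  have part1 : ∀ x, x ≠ t → ∀ a ∈ Ai x,
      C x a + ∑ y, p x a y * U y = U x →
      ∀ r, 0 < p x a r → δ + U r ≤ U x := by
    intro x hx a ha hopt r hr
    have h1 := hp1 x hx a ha
    have hsplitU : p x a r * U r + ∑ y ∈ univ.erase r, p x a y * U y
        = ∑ y, p x a y * U y :=
      Finset.add_sum_erase univ (fun y => p x a y * U y) (Finset.mem_univ r)
    have hsplitP : p x a r + ∑ y ∈ univ.erase r, p x a y = 1 := by
      rw [Finset.add_sum_erase univ (p x a) (Finset.mem_univ r)]; exact h1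
    -- termwise lower bound on the erased sum
    have hterm : ∑ y ∈ univ.erase r, p x a y * (U x - C x (e x y))
        ≤ ∑ y ∈ univ.erase r, p x a y * U y := by
      apply Finset.sum_le_sum
      intro y _
      rcases eq_or_lt_of_le (hp0 x hx a ha y) with h0 | h0
      · rw [← h0, zero_mul, zero_mul]
      · have := key x hx y ⟨a, ha, h0⟩
        have : U x - C x (e x y) ≤ U y := by linarith
        exact mul_le_mul_of_nonneg_left this (le_of_lt h0)
    have hexp : ∑ y ∈ univ.erase r, p x a y * (U x - C x (e x y))
        = (∑ y ∈ univ.erase r, p x a y) * U x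
          - ∑ y ∈ univ.erase r, p x a y * C x (e x y) := by
      rw [Finset.sum_mul, ← Finset.sum_sub_distrib]
      apply Finset.sum_congr rfl
      intro y _; ring
    have hc := hcond x hx a ha r hr
    have hPU : p x a r * U x + (∑ y ∈ univ.erase r, p x a y) * U x = U x := by
      rw [← add_mul, hsplitP, one_mul]
    have hterm' := hexp ▸ hterm
    -- combine: p_r * (δ + U r) ≤ p_r * U x
    have hmul : p x a r * (δ + U r) ≤ p x a r * U x := by
      have hexpand : p x a r * (δ + U r) = p x a r * δ + p x a r * U r :=
        mul_add _ _ _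
      linarith [hterm', hopt, hc, hsplitU, hPU, hexpand]
    exact le_of_mul_le_mul_left hmul hr
  refine ⟨part1, ?_⟩
  -- Part 2
  intro x hx
  obtain ⟨a, ha, hval⟩ := (hDP x hx).1
  have hopt : C x a + ∑ y, p x a y * U y = U x := hval.symm
  by_cases hgood : ∀ r, 0 < p x a r → U r < U x
  · exact ⟨a, ha, hopt, fun r hr =>
      ⟨part1 x hx a ha hopt r hr, fun _ => hgood r hr⟩⟩
  · push_neg at hgood
    obtain ⟨r, hr, hUr⟩ := hgood
    have h1 := part1 x hx a ha hopt r hr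
    have hUeq : U r = U x := le_antisymm (by linarith) hUr
    have hδ0 : δ = 0 := le_antisymm (by linarith) hδ
    have h1' := hp1 x hx a ha
    have hCapos := hCpos x hx a ha
    -- p x a r < 1
    have hprlt : p x a r ≠ 1 := by
      intro hp1r
      have := hdval x hx a ha r hp1r
      rw [this, hUeq] at hopt
      linarith
    have hsplitP : p x a r + ∑ y ∈ univ.erase r, p x a y = 1 := by
      rw [Finset.add_sum_erase univ (p x a) (Finset.mem_univ r)]; exact h1'
    have hsplitU : p x a r * U r + ∑ y ∈ univ.erase r, p x a y * U y
        = ∑ y, p x a y * U y :=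
      Finset.add_sum_erase univ (fun y => p x a y * U y) (Finset.mem_univ r)
    have hc := hcond x hx a ha r hr
    -- the slack terms g y = p y * (C_y + U y - U x) are nonneg and sum ≤ 0
    have hgnn : ∀ y ∈ univ.erase r, 0 ≤ p x a y * (C x (e x y) + U y - U x) := by
      intro y _
      rcases eq_or_lt_of_le (hp0 x hx a ha y) with h0 | h0
      · rw [← h0, zero_mul]
      · have := key x hx y ⟨a, ha, h0⟩
        have h2 : 0 ≤ C x (e x y) + U y - U x := by linarith
        exact mul_nonneg (le_of_lt h0) h2
    have hgexp : ∑ y ∈ univ.erase r, p x a y * (C x (e x y) + U y - U x)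
        = (∑ y ∈ univ.erase r, p x a y * C x (e x y))
          + (∑ y ∈ univ.erase r, p x a y * U y)
          - (∑ y ∈ univ.erase r, p x a y) * U x := by
      rw [Finset.sum_mul, ← Finset.sum_add_distrib, ← Finset.sum_sub_distrib]
      apply Finset.sum_congr rfl
      intro y _; ring
    have hgsum : ∑ y ∈ univ.erase r, p x a y * (C x (e x y) + U y - U x) ≤ 0 := by
      rw [hgexp]
      have hPU : p x a r * U x + (∑ y ∈ univ.erase r, p x a y) * U x = U x := by
        rw [← add_mul, hsplitP, one_mul]
      have hrU : p x a r * U r = p x a r * U x := by rw [hUeq]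
      have hrd : p x a r * δ = 0 := by rw [hδ0, mul_zero]
      linarith [hc, hopt, hsplitU, hPU, hrU, hrd]
    have hgzero : ∀ y ∈ univ.erase r, p x a y * (C x (e x y) + U y - U x) = 0 := by
      intro y hy
      have hle := Finset.sum_eq_zero_iff_of_nonneg hgnn
      have : ∑ y ∈ univ.erase r, p x a y * (C x (e x y) + U y - U x) = 0 :=
        le_antisymm hgsum (Finset.sum_nonneg hgnn)
      exact (hle.mp this) y hy
    -- there is y ≠ r with p x a y > 0
    have hexy : ∃ y ∈ univ.erase r, 0 < p x a y := by
      by_contra hno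
      push_neg at hno
      have : ∑ y ∈ univ.erase r, p x a y = 0 :=
        Finset.sum_eq_zero (fun y hy =>
          le_antisymm (hno y hy) (hp0 x hx a ha y))
      exact hprlt (by linarith)
    obtain ⟨y, hy, hpy⟩ := hexy
    have hyeq : C x (e x y) + U y - U x = 0 := by
      have := hgzero y hy
      rcases mul_eq_zero.mp this with h | h
      · exact absurd h (ne_of_gt hpy)
      · exact h
    -- the deterministic action e x y is optimal
    obtain ⟨heA, hep⟩ := he x hx y ⟨a, ha, hpy⟩
    have heval : C x (e x y) + ∑ z, p x (e x y) z * U z = U x := by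
      rw [hdval x hx (e x y) heA y hep]; linarith
    refine ⟨e x y, heA, heval, ?_⟩
    intro r' hr'
    have hr'y : r' = y := by
      by_contra hne
      have := hdet x hx (e x y) heA y hep r' hne
      rw [this] at hr'; exact lt_irrefl 0 hr'
    subst hr'y
    have hCey := hCpos x hx (e x r') heA
    constructor
    · exact part1 x hx (e x r') heA heval r' hr'
    · intro _; linarith
end

section
/- Suppose at a node x_i all actions lead only to two successor nodes z_1 and z_2: each a ∈ A_i determines p(a) ∈ [0,1] with transition probabilities p(x_i,a,z_2) = p(a) and p(x_i,a,z_1) = 1 − p(a), and has cost C(a) > 0; let e_1, e_2 ∈ A_i be the deterministic actions with p(e_1) = 0, p(e_2) = 1 and costs C_1 = C(e_1), C_2 = C(e_2). Assume that C(a) ≥ max((1−p(a))C_1, p(a)C_2) holds for every a ∈ A_i, and that the infima δ_1 = inf_{a ∈ A_i, a ≠ e_2} (C(a) − p(a)C_2)/(1−p(a)) and δ_2 = inf_{a ∈ A_i, a ≠ e_1} (C(a) − (1−p(a))C_1)/p(a) are attained. Then δ_* = min(δ_1, δ_2) ≥ 0, the inequalities C(a) ≥ (1−p(a))C_1 + p(a)δ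 and C(a) ≥ (1−p(a))δ + p(a)C_2 hold for every a ∈ A_i when δ = δ_*, and δ_* is the largest δ ≥ 0 for which both inequalities hold for all a ∈ A_i. -/
/-- Maximum allowable δ when `m = 2`, general action sets.
At a node whose actions all lead to two successors `z_1, z_2`, with deterministic
actions `e_1, e_2` of costs `C_1, C_2`, if the monotone causality condition with
`δ = 0` holds and the two infima `δ_1, δ_2` of the defining ratios are attained,
then `δ_* = min(δ_1, δ_2)` is nonnegative, the monotone δ-causality inequalities
hold for `δ = δ_*`, and `δ_*` is the largest such `δ ≥ 0`. -/
theorem stmt3 {A : Type*} (Ai : Set A) (p : A → ℝ) (C : A → ℝ)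
    (e₁ e₂ : A) (he₁ : e₁ ∈ Ai) (he₂ : e₂ ∈ Ai)
    (hp01 : ∀ a ∈ Ai, 0 ≤ p a ∧ p a ≤ 1)
    (hCpos : ∀ a ∈ Ai, 0 < C a)
    (hpe₁ : p e₁ = 0) (hpe₂ : p e₂ = 1)
    (hne₁ : ∀ a ∈ Ai, a ≠ e₁ → 0 < p a)
    (hne₂ : ∀ a ∈ Ai, a ≠ e₂ → p a < 1)
    -- monotone causality with δ = 0
    (hMC : ∀ a ∈ Ai, max ((1 - p a) * C e₁) (p a * C e₂) ≤ C a)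
    (δ₁ δ₂ : ℝ)
    -- the infima defining δ₁ and δ₂ are attained
    (hδ₁ : IsLeast {d : ℝ | ∃ a ∈ Ai, a ≠ e₂ ∧ d = (C a - p a * C e₂) / (1 - p a)} δ₁)
    (hδ₂ : IsLeast {d : ℝ | ∃ a ∈ Ai, a ≠ e₁ ∧ d = (C a - (1 - p a) * C e₁) / p a} δ₂) :
    IsGreatest {δ : ℝ | 0 ≤ δ ∧ ∀ a ∈ Ai,
        (1 - p a) * C e₁ + p a * δ ≤ C a ∧ (1 - p a) * δ + p a * C e₂ ≤ C a}
      (min δ₁ δ₂) := by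

  obtain ⟨⟨a₁, ha₁, hane₂, hd₁⟩, hlb₁⟩ := hδ₁
  obtain ⟨⟨a₂, ha₂, hane₁, hd₂⟩, hlb₂⟩ := hδ₂
  have h1pos : 0 < 1 - p a₁ := by linarith [hne₂ a₁ ha₁ hane₂]
  have h2pos : 0 < p a₂ := hne₁ a₂ ha₂ hane₁
  have hδ₁nn : 0 ≤ δ₁ := by
    rw [hd₁]
    apply div_nonneg _ h1pos.le
    have := le_max_right ((1 - p a₁) * C e₁) (p a₁ * C e₂)
    linarith [hMC a₁ ha₁]
  have hδ₂nn : 0 ≤ δ₂ := by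
    rw [hd₂]
    apply div_nonneg _ h2pos.le
    have := le_max_left ((1 - p a₂) * C e₁) (p a₂ * C e₂)
    linarith [hMC a₂ ha₂]
  constructor
  · refine ⟨le_min hδ₁nn hδ₂nn, fun a ha => ?_⟩
    constructor
    · by_cases hae : a = e₁
      · subst hae; rw [hpe₁]; ring_nf; simp
      · have hpa : 0 < p a := hne₁ a ha hae
        have hle : δ₂ ≤ (C a - (1 - p a) * C e₁) / p a := hlb₂ ⟨a, ha, hae, rfl⟩
        have : min δ₁ δ₂ ≤ (C a - (1 - p a) * C e₁) / p a := (min_le_right _ _).trans hle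
        rw [le_div_iff₀ hpa] at this
        nlinarith
    · by_cases hae : a = e₂
      · subst hae; rw [hpe₂]; ring_nf; simp
      · have hpa : p a < 1 := hne₂ a ha hae
        have hle : δ₁ ≤ (C a - p a * C e₂) / (1 - p a) := hlb₁ ⟨a, ha, hae, rfl⟩
        have : min δ₁ δ₂ ≤ (C a - p a * C e₂) / (1 - p a) := (min_le_left _ _).trans hle
        rw [le_div_iff₀ (by linarith)] at this
        nlinarith
  · rintro δ ⟨hδnn, hδ⟩
    refine le_min ?_ ?_
    · have := (hδ a₁ ha₁).2
      rw [hd₁, le_div_iff₀ h1pos]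
      nlinarith
    · have := (hδ a₂ ha₂).1
      rw [hd₂, le_div_iff₀ h2pos]
      nlinarith
end

section
/- Let K : [0,1] → ℝ be convex, positive, differentiable at 0 and at 1, and satisfy K(p) ≥ max((1−p)K(0), pK(1)) for all p ∈ [0,1]. Then δ_* = min(K(1) − K′(1), K(0) + K′(0)) is nonnegative and is the largest δ ≥ 0 such that K(p) ≥ (1−p)K(0) + pδ and K(p) ≥ (1−p)δ + pK(1) hold for all p ∈ [0,1]. (Here K(p) = C(1−p, p) is the transition cost over the full probability simplex A_i = Ξ_2, with deterministic costs C_1 = K(0), C_2 = K(1); the two displayed inequalities are the monotone δ-causality conditions.) -/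
/-!
Both causality conditions say that `K` lies above a line through an endpoint of its graph,
`(0, K 0)` resp. `(1, K 1)`, with slope `δ - K 0` resp. `K 1 - δ`. For a convex `K` such a line
lies below the graph exactly when its slope is bounded by the one-sided derivative at that
endpoint: the tangent line is a support line, and conversely the difference quotients tend to
the derivative. So the admissible `δ` are those with `δ ≤ K 0 + K'(0)` and `δ ≤ K 1 - K'(1)`, and
monotone causality is the case `δ = 0`, which makes `δ_*` nonnegative.
-/

open Set Filter Topology

section Slope

variable {𝕜 : Type*} [NontriviallyNormedField 𝕜] [LinearOrder 𝕜] [OrderClosedTopology 𝕜]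
  {f : 𝕜 → 𝕜} {s : Set 𝕜} {x f' c : 𝕜}

lemma HasDerivWithinAt.le_of_forall_le_slope (hd : HasDerivWithinAt f f' s x)
    (hx : AccPt x (𝓟 s)) (h : ∀ y ∈ s \ {x}, c ≤ slope f x y) : c ≤ f' :=
  have := accPt_principal_iff_nhdsWithin.mp hx
  ge_of_tendsto (hasDerivWithinAt_iff_tendsto_slope.mp hd) (eventually_nhdsWithin_of_forall h)

lemma HasDerivWithinAt.le_of_forall_slope_le (hd : HasDerivWithinAt f f' s x)
    (hx : AccPt x (𝓟 s)) (h : ∀ y ∈ s \ {x}, slope f x y ≤ c) : f' ≤ c :=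
  have := accPt_principal_iff_nhdsWithin.mp hx
  le_of_tendsto (hasDerivWithinAt_iff_tendsto_slope.mp hd) (eventually_nhdsWithin_of_forall h)

end Slope

lemma accPt_left_Icc {a b : ℝ} (hab : a < b) : AccPt a (𝓟 (Icc a b)) := by
  rw [accPt_principal_iff_nhdsWithin, Icc_sdiff_left]
  exact left_nhdsWithin_Ioc_neBot hab

lemma accPt_right_Icc {a b : ℝ} (hab : a < b) : AccPt b (𝓟 (Icc a b)) := by
  rw [accPt_principal_iff_nhdsWithin, Icc_sdiff_right]
  exact right_nhdsWithin_Ico_neBot hab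

lemma ConvexOn.add_mul_sub_le_of_hasDerivWithinAt {S : Set ℝ} {f : ℝ → ℝ} {x y f' : ℝ}
    (hfc : ConvexOn ℝ S f) (hx : x ∈ S) (hy : y ∈ S) (hd : HasDerivWithinAt f f' S x) :
    f x + f' * (y - x) ≤ f y := by
  rcases lt_trichotomy x y with hxy | rfl | hxy
  · have := hfc.le_slope_of_hasDerivWithinAt hx hy hxy hd
    rw [slope_def_field, le_div_iff₀ (sub_pos.2 hxy)] at this
    linarith
  · simp
  · have := hfc.slope_le_of_hasDerivWithinAt hy hx hxy hd
    rw [slope_comm, slope_def_field, div_le_iff_of_neg (sub_neg.2 hxy)] at this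
    linarith

/-- The monotone `δ`-causality conditions for the cost `K p = C(1 - p, p)` on `Ξ_2`. -/
def IsMonotoneDeltaCausal (K : ℝ → ℝ) (δ : ℝ) : Prop :=
  ∀ p ∈ Icc (0 : ℝ) 1, (1 - p) * K 0 + p * δ ≤ K p ∧ (1 - p) * δ + p * K 1 ≤ K p

section Causality

variable {K : ℝ → ℝ} {k₀ k₁ δ : ℝ}

lemma forall_left_causal_iff (hconv : ConvexOn ℝ (Icc 0 1) K)
    (hd₀ : HasDerivWithinAt K k₀ (Icc 0 1) 0) :
    (∀ p ∈ Icc (0 : ℝ) 1, (1 - p) * K 0 + p * δ ≤ K p) ↔ δ ≤ K 0 + k₀ := by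
  constructor
  · intro h
    have : δ - K 0 ≤ k₀ := hd₀.le_of_forall_le_slope (accPt_left_Icc zero_lt_one)
      fun p ⟨hp, hp0⟩ ↦ by
        rw [slope_def_field, sub_zero, le_div_iff₀ (hp.1.lt_of_ne (Ne.symm hp0))]
        linarith [h p hp]
    linarith
  · intro hδ p hp
    have := hconv.add_mul_sub_le_of_hasDerivWithinAt (left_mem_Icc.2 zero_le_one) hp hd₀
    nlinarith [hp.1]

lemma forall_right_causal_iff (hconv : ConvexOn ℝ (Icc 0 1) K)
    (hd₁ : HasDerivWithinAt K k₁ (Icc 0 1) 1) :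
    (∀ p ∈ Icc (0 : ℝ) 1, (1 - p) * δ + p * K 1 ≤ K p) ↔ δ ≤ K 1 - k₁ := by
  constructor
  · intro h
    have : k₁ ≤ K 1 - δ := hd₁.le_of_forall_slope_le (accPt_right_Icc zero_lt_one)
      fun p ⟨hp, hp1⟩ ↦ by
        rw [slope_def_field, div_le_iff_of_neg (sub_neg.2 (hp.2.lt_of_ne hp1))]
        linarith [h p hp]
    linarith
  · intro hδ p hp
    have := hconv.add_mul_sub_le_of_hasDerivWithinAt (right_mem_Icc.2 zero_le_one) hp hd₁
    nlinarith [hp.2]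

lemma isMonotoneDeltaCausal_iff (hconv : ConvexOn ℝ (Icc 0 1) K)
    (hd₀ : HasDerivWithinAt K k₀ (Icc 0 1) 0) (hd₁ : HasDerivWithinAt K k₁ (Icc 0 1) 1) :
    IsMonotoneDeltaCausal K δ ↔ δ ≤ min (K 1 - k₁) (K 0 + k₀) := by
  rw [le_min_iff, ← forall_left_causal_iff hconv hd₀, ← forall_right_causal_iff hconv hd₁,
    and_comm]
  exact forall₂_and

end Causality

theorem stmt4_general (K : ℝ → ℝ) (k₀ k₁ : ℝ)
    (hconv : ConvexOn ℝ (Set.Icc (0:ℝ) 1) K)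
    (hd₀ : HasDerivWithinAt K k₀ (Set.Icc (0:ℝ) 1) 0)
    (hd₁ : HasDerivWithinAt K k₁ (Set.Icc (0:ℝ) 1) 1)
    (hMC : ∀ p ∈ Set.Icc (0:ℝ) 1, max ((1 - p) * K 0) (p * K 1) ≤ K p) :
    IsGreatest {δ : ℝ | 0 ≤ δ ∧ ∀ p ∈ Set.Icc (0:ℝ) 1,
        (1 - p) * K 0 + p * δ ≤ K p ∧ (1 - p) * δ + p * K 1 ≤ K p}
      (min (K 1 - k₁) (K 0 + k₀)) := by
  have hchar (δ : ℝ) := isMonotoneDeltaCausal_iff (δ := δ) hconv hd₀ hd₁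
  have hcausal₀ : IsMonotoneDeltaCausal K 0 := fun p hp ↦ by
    simpa using max_le_iff.1 (hMC p hp)
  exact ⟨⟨(hchar 0).1 hcausal₀, (hchar _).2 le_rfl⟩, fun δ hδ ↦ (hchar δ).1 hδ.2⟩

/-- Maximum allowable δ for a convex cost on the full simplex.
Let `K : [0,1] → ℝ` be convex, positive, differentiable (within `[0,1]`) at the
endpoints, and monotone causal: `K(p) ≥ max((1−p)K(0), pK(1))`.  Then
`δ_* = min(K(1) − K′(1), K(0) + K′(0))` is the largest `δ ≥ 0` such that the
monotone δ-causality conditions `K(p) ≥ (1−p)K(0) + pδ` and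
`K(p) ≥ (1−p)δ + pK(1)` hold for all `p ∈ [0,1]`. -/
theorem stmt4 (K : ℝ → ℝ) (k₀ k₁ : ℝ)
    (hconv : ConvexOn ℝ (Set.Icc (0:ℝ) 1) K)
    (hpos : ∀ p ∈ Set.Icc (0:ℝ) 1, 0 < K p)
    (hd₀ : HasDerivWithinAt K k₀ (Set.Icc (0:ℝ) 1) 0)
    (hd₁ : HasDerivWithinAt K k₁ (Set.Icc (0:ℝ) 1) 1)
    (hMC : ∀ p ∈ Set.Icc (0:ℝ) 1, max ((1 - p) * K 0) (p * K 1) ≤ K p) :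
    IsGreatest {δ : ℝ | 0 ≤ δ ∧ ∀ p ∈ Set.Icc (0:ℝ) 1,
        (1 - p) * K 0 + p * δ ≤ K p ∧ (1 - p) * δ + p * K 1 ≤ K p}
      (min (K 1 - k₁) (K 0 + k₀)) :=
  stmt4_general K k₀ k₁ hconv hd₀ hd₁ hMC
end

section
/- Let m ≥ 2, let ξ ∈ ℝ^m satisfy ξ_j > 0 for all j and Σ_j ξ_j = 1, fix r ∈ {1,…,m} and δ ≥ 0, and let C_a, C_ã be positive reals with C_a < (1−ξ_r)·C_ã + ξ_r·δ. Define γ_{r,r} = 0 and γ_{r,j} = ξ_j/(1−ξ_r) for j ≠ r. Then there exist real numbers U_1,…,U_m such that both C_a + Σ_{j=1}^m ξ_j U_j < C_ã + Σ_{j≠r} γ_{r,j} U_j and C_a + Σ_{j=1}^m ξ_j U_j < U_r + δ. (This is the core of the sharpness of the monotone δ-causality condition: whenever the condition C_a ≥ (1−ξ_r)C_ã + ξ_r δ fails, one can construct an OSSP with these local data in which the non-deterministic action is uniquely optimal yet U(x_i) < U(z_r) + δ, so label-setting methods fail.) -/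
open Finset

/-- Core of the sharpness of the monotone δ-causality condition.
If the condition `C_a ≥ (1−ξ_r)·C_ã + ξ_r·δ` fails for a probability vector `ξ`
with all positive entries, some index `r`, and positive costs `C_a, C_ã`, then
there exist values `U_1,…,U_m` making the nondeterministic action strictly better
than the oblique-projection action while `U(x_i) < U(z_r) + δ`. -/
theorem stmt5 (m : ℕ) (hm : 2 ≤ m) (ξ : Fin m → ℝ)
    (hpos : ∀ j, 0 < ξ j) (hsum : ∑ j, ξ j = 1)
    (r : Fin m) (δ : ℝ) (hδ : 0 ≤ δ)
    (Ca Cat : ℝ) (hCa : 0 < Ca) (hCat : 0 < Cat)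
    (hlt : Ca < (1 - ξ r) * Cat + ξ r * δ) :
    ∃ U : Fin m → ℝ,
      Ca + ∑ j, ξ j * U j <
        Cat + ∑ j ∈ Finset.univ.erase r, (ξ j / (1 - ξ r)) * U j ∧
      Ca + ∑ j, ξ j * U j < U r + δ := by
  -- There is another index, so ξ r < 1.
  obtain ⟨s, hs⟩ : ∃ s : Fin m, s ≠ r := by
    haveI : Nontrivial (Fin m) := Fin.nontrivial_iff_two_le.mpr hm
    exact exists_ne r
  have hr1 : ξ r < 1 := by
    calc ξ r < ξ r + ξ s := by linarith [hpos s]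
    _ ≤ ∑ j, ξ j := by
        have := Finset.add_sum_erase Finset.univ ξ (Finset.mem_univ r)
        rw [← this]
        have hssub : ξ s ≤ ∑ j ∈ Finset.univ.erase r, ξ j := by
          apply Finset.single_le_sum (f := ξ)
          · intro i _; exact (hpos i).le
          · exact Finset.mem_erase.mpr ⟨hs, Finset.mem_univ s⟩
        linarith
    _ = 1 := hsum
  have hrpos := hpos r
  have h1r : 0 < 1 - ξ r := by linarith
  -- Key inequality: (Ca - δ)/(1-ξr) < (Cat - Ca)/ξr
  have hkey : (Ca - δ) / (1 - ξ r) < (Cat - Ca) / (ξ r) := by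
    rw [div_lt_div_iff₀ h1r hrpos]
    nlinarith
  set t := ((Ca - δ) / (1 - ξ r) + (Cat - Ca) / (ξ r)) / 2 with ht
  have h1 : (Ca - δ) / (1 - ξ r) < t := by rw [ht]; linarith
  have h2 : t < (Cat - Ca) / (ξ r) := by rw [ht]; linarith
  refine ⟨fun j => if j = r then t else 0, ?_, ?_⟩
  · have hsum1 : ∑ j, ξ j * (if j = r then t else 0) = ξ r * t := by
      rw [Finset.sum_eq_single r]
      · simp
      · intro b _ hb; simp [hb]
      · simp
    have hsum2 : ∑ j ∈ Finset.univ.erase r,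
        (ξ j / (1 - ξ r)) * (if j = r then t else 0) = 0 := by
      apply Finset.sum_eq_zero
      intro j hj
      simp [(Finset.mem_erase.mp hj).1]
    rw [hsum1, hsum2]
    have := (lt_div_iff₀ hrpos).mp h2
    linarith
  · have hsum1 : ∑ j, ξ j * (if j = r then t else 0) = ξ r * t := by
      rw [Finset.sum_eq_single r]
      · simp
      · intro b _ hb; simp [hb]
      · simp
    rw [hsum1]
    simp only [if_pos rfl, if_true]
    norm_num
    have := (div_lt_iff₀ h1r).mp h1
    linarith
end

section
/- Let d ∈ ℝ, δ ≥ 0, and let C : ℝ² \ {0} → ℝ be continuously differentiable, homogeneous of degree d (C(βq) = |β|^d C(q) for all β ≠ 0 and q ≠ 0), convex on the probability simplex Ξ_2 = {(ξ_1,ξ_2) : ξ_1, ξ_2 ≥ 0, ξ_1 + ξ_2 = 1}, and suppose that for every ξ ∈ Ξ_2 and each j ∈ {1,2} with ξ_j > 0 one has ∂C/∂ξ_j(ξ) − (d−1)C(ξ) > δ. Then C(ξ) ≥ max(C_1·ξ_1 + δ·ξ_2, δ·ξ_1 + C_2·ξ_2) for all ξ ∈ Ξ_2, where C_1 = C(1,0)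 and C_2 = C(0,1). -/
/-!
Along the edge `γ t = t • e_j + (1 - t) • e_k` of the simplex put `h t = C (γ t)`. Euler's
identity `DC(γ t) (γ t) = d C(γ t)` turns the derivative condition in the direction `e_k` into
`t h'(t) ≤ h(t) - δ`, so `(h t - δ) / t` is nonincreasing on `(0, 1]`. Comparing with `t = 1`
gives `h t ≥ C(e_j) t + δ (1 - t)`, and at `t = 0` this follows by continuity.
-/

open Set

theorem mul_le_of_mul_deriv_le {g : ℝ → ℝ} (hc : ContinuousOn g (Icc 0 1))
    (hd : DifferentiableOn ℝ g (Ioo 0 1)) (h : ∀ t ∈ Ioo (0 : ℝ) 1, t * deriv g t ≤ g t)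
    {t : ℝ} (ht : t ∈ Icc 0 1) : g 1 * t ≤ g t := by
  have hanti : AntitoneOn (fun t => g t / t) (Ioc 0 1) := by
    have hderiv : ∀ t ∈ Ioo (0 : ℝ) 1,
        HasDerivAt (fun t => g t / t) ((deriv g t * t - g t * 1) / t ^ 2) t := fun t ht =>
      ((hd t ht).differentiableAt (isOpen_Ioo.mem_nhds ht)).hasDerivAt.div (hasDerivAt_id t)
        ht.1.ne'
    refine antitoneOn_of_deriv_nonpos (convex_Ioc 0 1)
      ((hc.mono Ioc_subset_Icc_self).div continuousOn_id fun t ht => ht.1.ne') ?_ ?_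
    · rw [interior_Ioc]
      exact fun t ht => (hderiv t ht).differentiableAt.differentiableWithinAt
    · rw [interior_Ioc]
      intro t ht
      rw [(hderiv t ht).deriv]
      exact div_nonpos_of_nonpos_of_nonneg (by linarith [h t ht]) (sq_nonneg t)
  have hpos : ∀ t ∈ Ioc (0 : ℝ) 1, g 1 * t ≤ g t := fun t ht => by
    have : g 1 / 1 ≤ g t / t := hanti ht (right_mem_Ioc.2 one_pos) ht.2
    rwa [div_one, le_div_iff₀ ht.1] at this
  have hcl : t ∈ closure (Ioc 0 1) := by rwa [closure_Ioc zero_ne_one]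
  have hcont : ContinuousOn g (closure (Ioc 0 1)) := by rwa [closure_Ioc zero_ne_one]
  exact ContinuousWithinAt.closure_le hcl (by fun_prop) ((hcont t hcl).mono subset_closure) hpos

section Homogeneous

variable {E : Type*} [NormedAddCommGroup E] [NormedSpace ℝ E]

theorem fderiv_apply_self_of_homogeneous {C : E → ℝ} {d : ℝ} {x : E}
    (hC : DifferentiableAt ℝ C x) (hhom : ∀ β : ℝ, 0 < β → C (β • x) = β ^ d * C x) :
    fderiv ℝ C x x = d * C x := by
  have hray : HasDerivAt (fun β : ℝ => C (β • x)) (fderiv ℝ C x x) 1 := by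
    have hline : HasDerivAt (fun β : ℝ => β • x) x 1 := by
      simpa using (hasDerivAt_id (1 : ℝ)).smul_const x
    have hC' : HasFDerivAt C (fderiv ℝ C x) ((1 : ℝ) • x) := by
      rw [one_smul]; exact hC.hasFDerivAt
    exact hC'.comp_hasDerivAt 1 hline
  have hpow : HasDerivAt (fun β : ℝ => β ^ d * C x) (d * C x) 1 := by
    simpa using (Real.hasDerivAt_rpow_const (p := d) (Or.inl one_ne_zero)).mul_const (C x)
  refine hray.unique (hpow.congr_of_eventuallyEq ?_)
  filter_upwards [eventually_gt_nhds zero_lt_one] with β hβ using hhom β hβ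

theorem le_apply_segment_of_homogeneous {C : E → ℝ} {d δ : ℝ} {x y : E}
    (hdiff : ∀ t ∈ Icc (0 : ℝ) 1, DifferentiableAt ℝ C (t • x + (1 - t) • y))
    (hhom : ∀ t ∈ Ioo (0 : ℝ) 1, ∀ β : ℝ, 0 < β →
      C (β • (t • x + (1 - t) • y)) = β ^ d * C (t • x + (1 - t) • y))
    (hgrad : ∀ t ∈ Ioo (0 : ℝ) 1,
      δ ≤ fderiv ℝ C (t • x + (1 - t) • y) y - (d - 1) * C (t • x + (1 - t) • y))
    {t : ℝ} (ht : t ∈ Icc 0 1) : C x * t + δ * (1 - t) ≤ C (t • x + (1 - t) • y) := by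
  set γ : ℝ → E := fun t => t • x + (1 - t) • y with hγ
  have hγ_deriv : ∀ t, HasDerivAt γ (x - y) t := fun t => by
    have := ((hasDerivAt_id' t).smul_const x).add (((hasDerivAt_id' t).const_sub 1).smul_const y)
    rwa [one_smul, neg_one_smul, ← sub_eq_add_neg] at this
  have hg_deriv : ∀ t ∈ Icc (0 : ℝ) 1,
      HasDerivAt (fun t => C (γ t) - δ) (fderiv ℝ C (γ t) (x - y)) t := fun t ht =>
    ((hdiff t ht).hasFDerivAt.comp_hasDerivAt t (hγ_deriv t)).sub_const δ
  have hg_ode : ∀ t ∈ Ioo (0 : ℝ) 1, t * deriv (fun t => C (γ t) - δ) t ≤ C (γ t) - δ := by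
    intro t ht
    have heuler := fderiv_apply_self_of_homogeneous (hdiff t (Ioo_subset_Icc_self ht)) (hhom t ht)
    rw [(hg_deriv t (Ioo_subset_Icc_self ht)).deriv]
    simp only [hγ, map_add, map_sub, map_smul, smul_eq_mul] at heuler ⊢
    linarith [hgrad t ht]
  have h : (C (γ 1) - δ) * t ≤ C (γ t) - δ := mul_le_of_mul_deriv_le
    (fun t ht => (hg_deriv t ht).continuousAt.continuousWithinAt)
    (fun t ht => (hg_deriv t (Ioo_subset_Icc_self ht)).differentiableAt.differentiableWithinAt)
    hg_ode ht
  rw [show γ 1 = x by simp [hγ]] at h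
  linarith

end Homogeneous

theorem le_apply_edge_stdSimplex {ι : Type*} [Fintype ι] [DecidableEq ι] {C : (ι → ℝ) → ℝ}
    {d δ : ℝ} (hdiff : ∀ ξ ∈ stdSimplex ℝ ι, DifferentiableAt ℝ C ξ)
    (hhom : ∀ ξ ∈ stdSimplex ℝ ι, ∀ β : ℝ, 0 < β → C (β • ξ) = β ^ d * C ξ)
    (hgrad : ∀ ξ ∈ stdSimplex ℝ ι, ∀ j, 0 < ξ j →
      δ ≤ fderiv ℝ C ξ (Pi.single j 1) - (d - 1) * C ξ)
    {j k : ι} (hjk : j ≠ k) {t : ℝ} (ht : t ∈ Icc 0 1) :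
    C (Pi.single j 1) * t + δ * (1 - t) ≤ C (t • Pi.single j 1 + (1 - t) • Pi.single k 1) := by
  have hedge : ∀ t ∈ Icc (0 : ℝ) 1,
      t • Pi.single j 1 + (1 - t) • Pi.single k 1 ∈ stdSimplex ℝ ι := fun t ht =>
    convex_stdSimplex ℝ ι (single_mem_stdSimplex ℝ j) (single_mem_stdSimplex ℝ k) ht.1
      (by linarith [ht.2]) (by ring)
  refine le_apply_segment_of_homogeneous (fun t ht => hdiff _ (hedge t ht))
    (fun t ht => hhom _ (hedge t (Ioo_subset_Icc_self ht)))
    (fun t ht => hgrad _ (hedge t (Ioo_subset_Icc_self ht)) k ?_) ht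
  simpa [hjk] using ht.2

theorem stmt6_general (d δ : ℝ) (C : (Fin 2 → ℝ) → ℝ)
    (hsmooth : ContDiffOn ℝ 1 C {(0 : Fin 2 → ℝ)}ᶜ)
    (hhom : ∀ β : ℝ, β ≠ 0 → ∀ q : Fin 2 → ℝ, q ≠ 0 → C (β • q) = |β| ^ d * C q)
    (hgrad : ∀ ξ : Fin 2 → ℝ, (0 ≤ ξ 0 ∧ 0 ≤ ξ 1 ∧ ξ 0 + ξ 1 = 1) →
      ∀ j : Fin 2, 0 < ξ j →
        δ < fderiv ℝ C ξ (Pi.single j 1) - (d - 1) * C ξ) :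
    ∀ ξ : Fin 2 → ℝ, (0 ≤ ξ 0 ∧ 0 ≤ ξ 1 ∧ ξ 0 + ξ 1 = 1) →
      max (C ![1, 0] * ξ 0 + δ * ξ 1) (δ * ξ 0 + C ![0, 1] * ξ 1) ≤ C ξ := by
  have hsimplex (ξ : Fin 2 → ℝ) :
      ξ ∈ stdSimplex ℝ (Fin 2) ↔ 0 ≤ ξ 0 ∧ 0 ≤ ξ 1 ∧ ξ 0 + ξ 1 = 1 := by
    simp [stdSimplex, Fin.forall_fin_two, Fin.sum_univ_two, and_assoc]
  have hne (ξ : Fin 2 → ℝ) (hξ : ξ ∈ stdSimplex ℝ (Fin 2)) : ξ ≠ 0 := by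
    rintro rfl; simp [stdSimplex] at hξ
  have edge {j k : Fin 2} (hjk : j ≠ k) {t : ℝ} (ht : t ∈ Icc 0 1) :
      C (Pi.single j 1) * t + δ * (1 - t) ≤ C (t • Pi.single j 1 + (1 - t) • Pi.single k 1) :=
    le_apply_edge_stdSimplex
      (fun ξ hξ => (hsmooth.differentiableOn one_ne_zero).differentiableAt
        (isOpen_compl_singleton.mem_nhds (hne ξ hξ)))
      (fun ξ hξ β hβ => by rw [hhom β hβ.ne' ξ (hne ξ hξ), abs_of_pos hβ])
      (fun ξ hξ j hj => (hgrad ξ ((hsimplex ξ).1 hξ) j hj).le) hjk ht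
  rintro ξ ⟨h0, h1, hsum⟩
  have e0 : ξ = ξ 0 • Pi.single 0 1 + (1 - ξ 0) • Pi.single 1 1 := by
    ext i; fin_cases i <;> simp; linarith
  have e1 : ξ = ξ 1 • Pi.single 1 1 + (1 - ξ 1) • Pi.single 0 1 := by
    ext i; fin_cases i <;> simp; linarith
  have c0 : (![1, 0] : Fin 2 → ℝ) = Pi.single 0 1 := by ext i; fin_cases i <;> simp
  have c1 : (![0, 1] : Fin 2 → ℝ) = Pi.single 1 1 := by ext i; fin_cases i <;> simp
  rw [c0, c1]
  refine max_le ?_ ?_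
  · have h := edge (j := 0) (k := 1) (by decide) ⟨h0, by linarith⟩
    rwa [← e0, show 1 - ξ 0 = ξ 1 by linarith] at h
  · have h := edge (j := 1) (k := 0) (by decide) ⟨h1, by linarith⟩
    rwa [← e1, show 1 - ξ 1 = ξ 0 by linarith, add_comm] at h

/-- Monotone δ-causality for homogeneous costs when `m = 2`.
Let `C` be continuously differentiable on `ℝ² \ {0}`, homogeneous of degree `d`,
convex on the probability simplex `Ξ₂`, and suppose
`∂C/∂ξ_j(ξ) − (d−1)C(ξ) > δ` whenever `ξ ∈ Ξ₂` and `ξ_j > 0`.  Then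
`C(ξ) ≥ max(C₁ξ₁ + δξ₂, δξ₁ + C₂ξ₂)` on `Ξ₂`, where `C₁ = C(1,0)`, `C₂ = C(0,1)`. -/
theorem stmt6 (d δ : ℝ) (hδ : 0 ≤ δ) (C : (Fin 2 → ℝ) → ℝ)
    (hsmooth : ContDiffOn ℝ 1 C {(0 : Fin 2 → ℝ)}ᶜ)
    (hhom : ∀ β : ℝ, β ≠ 0 → ∀ q : Fin 2 → ℝ, q ≠ 0 → C (β • q) = |β| ^ d * C q)
    (hconv : ConvexOn ℝ {ξ : Fin 2 → ℝ | 0 ≤ ξ 0 ∧ 0 ≤ ξ 1 ∧ ξ 0 + ξ 1 = 1} C)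
    (hgrad : ∀ ξ : Fin 2 → ℝ, (0 ≤ ξ 0 ∧ 0 ≤ ξ 1 ∧ ξ 0 + ξ 1 = 1) →
      ∀ j : Fin 2, 0 < ξ j →
        δ < fderiv ℝ C ξ (Pi.single j 1) - (d - 1) * C ξ) :
    ∀ ξ : Fin 2 → ℝ, (0 ≤ ξ 0 ∧ 0 ≤ ξ 1 ∧ ξ 0 + ξ 1 = 1) →
      max (C ![1, 0] * ξ 0 + δ * ξ 1) (δ * ξ 0 + C ![0, 1] * ξ 1) ≤ C ξ :=
  stmt6_general d δ C hsmooth hhom hgrad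
end

section
/- Let m = 2 and let V_s denote the set of points of the speed profile V that are nonnegative linear combinations of v_1 and v_2. If V_s is fully contained in the parallelogram {θ_1 v_1 + θ_2 v_2 : 0 ≤ θ_1 ≤ 1, 0 ≤ θ_2 ≤ 1}, then the transition cost satisfies C(ξ) ≥ ξ_1 C_1 and C(ξ) ≥ ξ_2 C_2 for every ξ ∈ Ξ_2; that is, the simplex (x = 0, z_1, z_2) is monotone causal. -/
/-- The semi-Lagrangian transition cost `C(ξ) = |x̃_ξ| / f(a_ξ)`, written as a
function of the waypoint `w = x̃_ξ` (with direction `a_ξ = w/|w|`).  In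
particular `slCost f (z j) = |z_j|/f_j = C_j`. -/
noncomputable def slCost {E : Type*} [NormedAddCommGroup E] [InnerProductSpace ℝ E]
    (f : E → ℝ) (w : E) : ℝ := ‖w‖ / f (‖w‖⁻¹ • w)

/-- The velocity in the direction of `w`:  `slVel f (z j) = v_j = f_j z_j/|z_j|`. -/
noncomputable def slVel {E : Type*} [NormedAddCommGroup E] [InnerProductSpace ℝ E]
    (f : E → ℝ) (w : E) : E := f (‖w‖⁻¹ • w) • (‖w‖⁻¹ • w)

/-- The speed profile `V = {f(a)·a : |a| = 1}`. -/
def speedProfile {E : Type*} [NormedAddCommGroup E] [InnerProductSpace ℝ E]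
    (f : E → ℝ) : Set E :=
  {v | ∃ a : E, ‖a‖ = 1 ∧ v = f a • a}

/-- Sufficient causality condition on `V` in `ℝ²`:
bounding parallelograms.  If the sector `V_s` of the speed profile (its points
that are nonnegative combinations of `v₁, v₂`) is contained in the parallelogram
with vertices `0, v₁, v₂, v₁+v₂`, then `C(ξ) ≥ ξ₁C₁` and `C(ξ) ≥ ξ₂C₂` on `Ξ₂`;
i.e., the simplex `(x = 0, z₁, z₂)` is monotone causal. -/
theorem stmt8 (z₁ z₂ : EuclideanSpace ℝ (Fin 2))
    (hz : LinearIndependent ℝ ![z₁, z₂])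
    (f : EuclideanSpace ℝ (Fin 2) → ℝ)
    (hfc : ContinuousOn f (Metric.sphere (0 : EuclideanSpace ℝ (Fin 2)) 1))
    (hfpos : ∀ a : EuclideanSpace ℝ (Fin 2), ‖a‖ = 1 → 0 < f a)
    (hcontain :
      {v ∈ speedProfile f | ∃ θ₁ θ₂ : ℝ, 0 ≤ θ₁ ∧ 0 ≤ θ₂ ∧
          v = θ₁ • slVel f z₁ + θ₂ • slVel f z₂} ⊆
        {v | ∃ θ₁ θ₂ : ℝ, θ₁ ∈ Set.Icc (0:ℝ) 1 ∧ θ₂ ∈ Set.Icc (0:ℝ) 1 ∧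
          v = θ₁ • slVel f z₁ + θ₂ • slVel f z₂}) :
    ∀ ξ₁ ξ₂ : ℝ, 0 ≤ ξ₁ → 0 ≤ ξ₂ → ξ₁ + ξ₂ = 1 →
      ξ₁ * slCost f z₁ ≤ slCost f (ξ₁ • z₁ + ξ₂ • z₂) ∧
      ξ₂ * slCost f z₂ ≤ slCost f (ξ₁ • z₁ + ξ₂ • z₂) := by
  intro ξ₁ ξ₂ hξ₁ hξ₂ hsum
  have hz1 : z₁ ≠ 0 := by have := hz.ne_zero 0; simpa using this
  have hz2 : z₂ ≠ 0 := by have := hz.ne_zero 1; simpa using this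
  have hpair : ∀ s t : ℝ, s • z₁ + t • z₂ = 0 → s = 0 ∧ t = 0 :=
    LinearIndependent.pair_iff.mp hz
  set w : EuclideanSpace ℝ (Fin 2) := ξ₁ • z₁ + ξ₂ • z₂ with hw
  have hwne : w ≠ 0 := by
    intro h
    rcases hpair ξ₁ ξ₂ h with ⟨h1, h2⟩
    rw [h1, h2] at hsum; norm_num at hsum
  have hnw : (0:ℝ) < ‖w‖ := norm_pos_iff.mpr hwne
  have hn1 : (0:ℝ) < ‖z₁‖ := norm_pos_iff.mpr hz1
  have hn2 : (0:ℝ) < ‖z₂‖ := norm_pos_iff.mpr hz2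
  have unit : ∀ u : EuclideanSpace ℝ (Fin 2), u ≠ 0 → ‖‖u‖⁻¹ • u‖ = 1 := by
    intro u hu
    rw [norm_smul, norm_inv, norm_norm, inv_mul_cancel₀ (norm_ne_zero_iff.mpr hu)]
  have hf1 : 0 < f (‖z₁‖⁻¹ • z₁) := hfpos _ (unit _ hz1)
  have hf2 : 0 < f (‖z₂‖⁻¹ • z₂) := hfpos _ (unit _ hz2)
  set F := f (‖w‖⁻¹ • w) with hF
  have hfw : 0 < F := hfpos _ (unit _ hwne)
  set c₁ := f (‖z₁‖⁻¹ • z₁) * ‖z₁‖⁻¹ with hc₁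
  set c₂ := f (‖z₂‖⁻¹ • z₂) * ‖z₂‖⁻¹ with hc₂
  have hc1pos : 0 < c₁ := mul_pos hf1 (inv_pos.mpr hn1)
  have hc2pos : 0 < c₂ := mul_pos hf2 (inv_pos.mpr hn2)
  have hv1 : slVel f z₁ = c₁ • z₁ := by rw [slVel, smul_smul]
  have hv2 : slVel f z₂ = c₂ • z₂ := by rw [slVel, smul_smul]
  have key : F • (‖w‖⁻¹ • w) = (F * ‖w‖⁻¹ * ξ₁) • z₁ + (F * ‖w‖⁻¹ * ξ₂) • z₂ := by
    rw [hw]; module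
  have hmem : F • (‖w‖⁻¹ • w) ∈
      {v | ∃ θ₁ θ₂ : ℝ, θ₁ ∈ Set.Icc (0:ℝ) 1 ∧ θ₂ ∈ Set.Icc (0:ℝ) 1 ∧
        v = θ₁ • slVel f z₁ + θ₂ • slVel f z₂} := by
    apply hcontain
    refine ⟨⟨_, unit _ hwne, rfl⟩, F * ‖w‖⁻¹ * ξ₁ * c₁⁻¹, F * ‖w‖⁻¹ * ξ₂ * c₂⁻¹,
      by positivity, by positivity, ?_⟩
    rw [hv1, hv2, key, smul_smul, smul_smul]
    rw [mul_assoc _ c₁⁻¹ c₁, inv_mul_cancel₀ hc1pos.ne', mul_one,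
        mul_assoc _ c₂⁻¹ c₂, inv_mul_cancel₀ hc2pos.ne', mul_one]
  obtain ⟨θ₁', θ₂', ⟨h10, h11⟩, ⟨h20, h21⟩, heq⟩ := hmem
  rw [hv1, hv2, key, smul_smul, smul_smul] at heq
  have h0 : ((θ₁' * c₁) • z₁ + (θ₂' * c₂) • z₂) -
      ((F * ‖w‖⁻¹ * ξ₁) • z₁ + (F * ‖w‖⁻¹ * ξ₂) • z₂) = 0 := by
    rw [← heq]; simp
  have hdiff : (θ₁' * c₁ - F * ‖w‖⁻¹ * ξ₁) • z₁ + (θ₂' * c₂ - F * ‖w‖⁻¹ * ξ₂) • z₂ = 0 := by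
    rw [sub_smul, sub_smul, ← h0]; abel
  obtain ⟨e1, e2⟩ := hpair _ _ hdiff
  have hb1 : F * ‖w‖⁻¹ * ξ₁ ≤ c₁ := by
    have := mul_le_mul_of_nonneg_right h11 hc1pos.le
    linarith
  have hb2 : F * ‖w‖⁻¹ * ξ₂ ≤ c₂ := by
    have := mul_le_mul_of_nonneg_right h21 hc2pos.le
    linarith
  have main : ∀ A B ξ : ℝ, 0 < A → 0 < B → 0 ≤ ξ →
      F * ‖w‖⁻¹ * ξ ≤ B * A⁻¹ → ξ * (A / B) ≤ ‖w‖ / F := by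
    intro A B ξ hA hB hξ h
    have hwne' : ‖w‖ ≠ 0 := hnw.ne'
    have h2 := mul_le_mul_of_nonneg_right h (mul_pos hnw hA).le
    have eL : F * ‖w‖⁻¹ * ξ * (‖w‖ * A) = F * ξ * A := by
      field_simp
    have eR : B * A⁻¹ * (‖w‖ * A) = B * ‖w‖ := by
      field_simp
    rw [eL, eR] at h2
    rw [mul_div_assoc', div_le_div_iff₀ hB hfw]
    calc ξ * A * F = F * ξ * A := by ring
      _ ≤ B * ‖w‖ := h2
      _ = ‖w‖ * B := by ring
  rw [hc₁] at hb1
  rw [hc₂] at hb2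
  constructor
  · simpa only [slCost] using main ‖z₁‖ (f (‖z₁‖⁻¹ • z₁)) ξ₁ hn1 hf1 hξ₁ hb1
  · simpa only [slCost] using main ‖z₂‖ (f (‖z₂‖⁻¹ • z₂)) ξ₂ hn2 hf2 hξ₂ hb2
end

section
/- Let m = 2 and suppose the speed profile V is convex (the enclosed body is convex) and admits outward normal vectors n̂_1 at v_1 and n̂_2 at v_2, i.e., nonzero vectors with (v − v_i)·n̂_i ≤ 0 for every v in the enclosed body, i = 1, 2. If v_1·n̂_2 ≥ 0 and v_2·n̂_1 ≥ 0, then every point of V_s (the portion of V expressible as a nonnegative combination of v_1, v_2) lies in the parallelogram {θ_1 v_1 + θ_2 v_2 : 0 ≤ θ_1, θ_2 ≤ 1}, and consequently C(ξ) ≥ max(ξ_1 C_1, ξ_2 C_2) for every ξ ∈ Ξ_2 (the simplex is monotone causal). -/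
open scoped RealInnerProductSpace

/-- The body enclosed by the speed profile. -/
def speedBody {E : Type*} [NormedAddCommGroup E] [InnerProductSpace ℝ E]
    (f : E → ℝ) : Set E :=
  {v | ∃ (a : E) (c : ℝ), ‖a‖ = 1 ∧ 0 ≤ c ∧ c ≤ 1 ∧ v = (c * f a) • a}

/-- Causality and tangent information in `ℝ²`.
If the speed profile is convex, with outward normals `n̂₁` at `v₁` and `n̂₂` at
`v₂`, and `v₁·n̂₂ ≥ 0`, `v₂·n̂₁ ≥ 0`, then the sector `V_s` lies in the
parallelogram spanned by `v₁, v₂`, and consequently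
`C(ξ) ≥ max(ξ₁C₁, ξ₂C₂)` on `Ξ₂` (the simplex is monotone causal). -/
theorem stmt9 (z₁ z₂ : EuclideanSpace ℝ (Fin 2))
    (hz : LinearIndependent ℝ ![z₁, z₂])
    (f : EuclideanSpace ℝ (Fin 2) → ℝ)
    (hfc : ContinuousOn f (Metric.sphere (0 : EuclideanSpace ℝ (Fin 2)) 1))
    (hfpos : ∀ a : EuclideanSpace ℝ (Fin 2), ‖a‖ = 1 → 0 < f a)
    (hVconv : Convex ℝ (speedBody f))
    (n₁ n₂ : EuclideanSpace ℝ (Fin 2)) (hn₁ : n₁ ≠ 0) (hn₂ : n₂ ≠ 0)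
    (hout₁ : ∀ v ∈ speedBody f, ⟪v - slVel f z₁, n₁⟫ ≤ 0)
    (hout₂ : ∀ v ∈ speedBody f, ⟪v - slVel f z₂, n₂⟫ ≤ 0)
    (h₁₂ : 0 ≤ ⟪slVel f z₁, n₂⟫) (h₂₁ : 0 ≤ ⟪slVel f z₂, n₁⟫) :
    ({v ∈ speedProfile f | ∃ θ₁ θ₂ : ℝ, 0 ≤ θ₁ ∧ 0 ≤ θ₂ ∧
        v = θ₁ • slVel f z₁ + θ₂ • slVel f z₂} ⊆
      {v | ∃ θ₁ θ₂ : ℝ, θ₁ ∈ Set.Icc (0:ℝ) 1 ∧ θ₂ ∈ Set.Icc (0:ℝ) 1 ∧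
        v = θ₁ • slVel f z₁ + θ₂ • slVel f z₂}) ∧
    ∀ ξ₁ ξ₂ : ℝ, 0 ≤ ξ₁ → 0 ≤ ξ₂ → ξ₁ + ξ₂ = 1 →
      max (ξ₁ * slCost f z₁) (ξ₂ * slCost f z₂) ≤ slCost f (ξ₁ • z₁ + ξ₂ • z₂) := by

  classical
  have hz₁ : z₁ ≠ 0 := by simpa using hz.ne_zero 0
  have hz₂ : z₂ ≠ 0 := by simpa using hz.ne_zero 1
  have hunit : ∀ w : EuclideanSpace ℝ (Fin 2), w ≠ 0 → ‖(‖w‖⁻¹ • w)‖ = 1 := by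
    intro w hw
    rw [norm_smul, norm_inv, norm_norm, inv_mul_cancel₀ (norm_ne_zero_iff.mpr hw)]
  have hbody : ∀ v ∈ speedProfile f, v ∈ speedBody f := by
    rintro v ⟨a, ha, rfl⟩
    exact ⟨a, 1, ha, zero_le_one, le_refl 1, by rw [one_mul]⟩
  have hposn : ∀ (z n : EuclideanSpace ℝ (Fin 2)), n ≠ 0 →
      (∀ v ∈ speedBody f, ⟪v - slVel f z, n⟫ ≤ 0) → 0 < ⟪slVel f z, n⟫ := by
    intro z n hnn hout
    set a := ‖n‖⁻¹ • n with ha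
    have han : ‖a‖ = 1 := hunit n hnn
    have hfa : 0 < f a := hfpos a han
    have hnpos : 0 < ‖n‖ := norm_pos_iff.mpr hnn
    have hmem : f a • a ∈ speedBody f := ⟨a, 1, han, zero_le_one, le_refl 1, by rw [one_mul]⟩
    have h := hout _ hmem
    rw [inner_sub_left] at h
    have hin : ⟪f a • a, n⟫ = f a * ‖n‖⁻¹ * (‖n‖ * ‖n‖) := by
      rw [ha, smul_smul, real_inner_smul_left, real_inner_self_eq_norm_mul_norm]
    have hgt : 0 < f a * ‖n‖⁻¹ * (‖n‖ * ‖n‖) :=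
      mul_pos (mul_pos hfa (inv_pos.mpr hnpos)) (mul_pos hnpos hnpos)
    rw [hin] at h
    linarith
  have p₁ : 0 < ⟪slVel f z₁, n₁⟫ := hposn z₁ n₁ hn₁ hout₁
  have p₂ : 0 < ⟪slVel f z₂, n₂⟫ := hposn z₂ n₂ hn₂ hout₂
  have key : ∀ θ₁ θ₂ : ℝ, 0 ≤ θ₁ → 0 ≤ θ₂ →
      θ₁ • slVel f z₁ + θ₂ • slVel f z₂ ∈ speedBody f → θ₁ ≤ 1 ∧ θ₂ ≤ 1 := by
    intro θ₁ θ₂ h1 h2 hmem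
    have e₁ := hout₁ _ hmem
    have e₂ := hout₂ _ hmem
    rw [inner_sub_left, inner_add_left, real_inner_smul_left, real_inner_smul_left] at e₁ e₂
    constructor
    · nlinarith [mul_nonneg h2 h₂₁]
    · nlinarith [mul_nonneg h1 h₁₂]
  have hz_eq : ∀ z : EuclideanSpace ℝ (Fin 2), z ≠ 0 → slCost f z • slVel f z = z := by
    intro z hzz
    have han := hunit z hzz
    have hfz : f (‖z‖⁻¹ • z) ≠ 0 := ne_of_gt (hfpos _ han)
    have hzn : ‖z‖ ≠ 0 := norm_ne_zero_iff.mpr hzz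
    unfold slVel slCost
    rw [smul_smul, smul_smul]
    have : ‖z‖ / f (‖z‖⁻¹ • z) * f (‖z‖⁻¹ • z) * ‖z‖⁻¹ = 1 := by
      rw [div_mul_cancel₀ _ hfz, mul_inv_cancel₀ hzn]
    rw [this, one_smul]
  constructor
  · rintro v ⟨hv, θ₁, θ₂, h1, h2, rfl⟩
    obtain ⟨l1, l2⟩ := key θ₁ θ₂ h1 h2 (hbody _ hv)
    exact ⟨θ₁, θ₂, ⟨h1, l1⟩, ⟨h2, l2⟩, rfl⟩
  · intro ξ₁ ξ₂ hξ₁ hξ₂ hsum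
    set w := ξ₁ • z₁ + ξ₂ • z₂ with hw
    have hwne : w ≠ 0 := by
      intro h
      obtain ⟨hx, hy⟩ := (LinearIndependent.pair_iff.mp hz) ξ₁ ξ₂ (hw ▸ h)
      linarith
    have han : ‖(‖w‖⁻¹ • w)‖ = 1 := hunit w hwne
    have hfw : 0 < f (‖w‖⁻¹ • w) := hfpos _ han
    have hwpos : 0 < ‖w‖ := norm_pos_iff.mpr hwne
    have hCpos : 0 < slCost f w := div_pos hwpos hfw
    have hvel : slVel f w = (slCost f w)⁻¹ • w := by
      unfold slVel slCost
      rw [smul_smul, inv_div, div_eq_mul_inv]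
    have hC₁ : 0 < slCost f z₁ := div_pos (norm_pos_iff.mpr hz₁) (hfpos _ (hunit z₁ hz₁))
    have hC₂ : 0 < slCost f z₂ := div_pos (norm_pos_iff.mpr hz₂) (hfpos _ (hunit z₂ hz₂))
    have e₁ : slCost f z₁ • slVel f z₁ = z₁ := hz_eq z₁ hz₁
    have e₂ : slCost f z₂ • slVel f z₂ = z₂ := hz_eq z₂ hz₂
    have hdecomp : slVel f w = ((slCost f w)⁻¹ * (ξ₁ * slCost f z₁)) • slVel f z₁
        + ((slCost f w)⁻¹ * (ξ₂ * slCost f z₂)) • slVel f z₂ := by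
      rw [hvel]
      have hrhs : ((slCost f w)⁻¹ * (ξ₁ * slCost f z₁)) • slVel f z₁
          + ((slCost f w)⁻¹ * (ξ₂ * slCost f z₂)) • slVel f z₂
          = (slCost f w)⁻¹ • (ξ₁ • (slCost f z₁ • slVel f z₁)
            + ξ₂ • (slCost f z₂ • slVel f z₂)) := by module
      rw [hrhs, e₁, e₂]
    have hmem : slVel f w ∈ speedBody f := hbody _ ⟨‖w‖⁻¹ • w, han, rfl⟩
    rw [hdecomp] at hmem
    obtain ⟨l1, l2⟩ := key _ _
      (mul_nonneg (inv_nonneg.mpr hCpos.le) (mul_nonneg hξ₁ hC₁.le))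
      (mul_nonneg (inv_nonneg.mpr hCpos.le) (mul_nonneg hξ₂ hC₂.le)) hmem
    have g1 : ξ₁ * slCost f z₁ ≤ slCost f w := by
      rw [inv_mul_le_iff₀ hCpos, mul_one] at l1; exact l1
    have g2 : ξ₂ * slCost f z₂ ≤ slCost f w := by
      rw [inv_mul_le_iff₀ hCpos, mul_one] at l2; exact l2
    exact max_le g1 g2
end

section
/- Let m = 3. For each permutation (i,j,k) of (1,2,3) define the parallelogram Π^k = {θ_1 v_i + θ_2 v_j : θ_1, θ_2 ∈ [0,1]}, the planar slice V^k = {v ∈ V : v = θ_1 v_i + θ_2 v_j for some θ_1, θ_2 ≥ 0}, and the generalized semi-infinite cylinder Ψ^k = {θ_1 v_k + θ_2 v : v ∈ V^k, θ_1 ≥ 0, θ_2 ∈ [0,1]}. Suppose the speed profile V is convex, V_s ⊂ Ψ^1 ∩ Ψ^2 ∩ Ψ^3, and V^r ⊂ Π^r for r = 1,2,3. Then the simplex (x = 0, z_1, z_2, z_3) is monotone causal: for every ξ in the interior of Ξ_3 and every r ∈ {1,2,3}, C(ξ) ≥ (1−ξ_r)·C(γ_r), where γ_r is the oblique projection of ξ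 (γ_{r,r} = 0, γ_{r,j} = ξ_j/(1−ξ_r) for j ≠ r); and for every ξ on a face of Ξ_3 with ξ_r = 0 and ξ_i, ξ_j > 0, C(ξ) ≥ ξ_i C_i and C(ξ) ≥ ξ_j C_j. -/
open Finset

/-- `V_s`:  the part of the speed profile spanned with nonnegative coefficients
by the vertex velocities `v 0, v 1, v 2`. -/
def sectorVs (f : EuclideanSpace ℝ (Fin 3) → ℝ)
    (v : Fin 3 → EuclideanSpace ℝ (Fin 3)) : Set (EuclideanSpace ℝ (Fin 3)) :=
  {w ∈ speedProfile f | ∃ θ : Fin 3 → ℝ, (∀ i, 0 ≤ θ i) ∧ w = ∑ i, θ i • v i}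

/-- The planar slice `V^r = {v ∈ V : v = θ₁ v_i + θ₂ v_j, θ₁, θ₂ ≥ 0}`. -/
def sliceV (f : EuclideanSpace ℝ (Fin 3) → ℝ)
    (v : Fin 3 → EuclideanSpace ℝ (Fin 3)) (r : Fin 3) :
    Set (EuclideanSpace ℝ (Fin 3)) :=
  {w ∈ speedProfile f | ∃ θ : Fin 3 → ℝ, θ r = 0 ∧ (∀ i, 0 ≤ θ i) ∧ w = ∑ i, θ i • v i}

/-- The parallelogram `Π^r = {θ₁ v_i + θ₂ v_j : θ₁, θ₂ ∈ [0,1]}`. -/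
def parallelogram (v : Fin 3 → EuclideanSpace ℝ (Fin 3)) (r : Fin 3) :
    Set (EuclideanSpace ℝ (Fin 3)) :=
  {w | ∃ θ : Fin 3 → ℝ, θ r = 0 ∧ (∀ i, 0 ≤ θ i ∧ θ i ≤ 1) ∧ w = ∑ i, θ i • v i}

/--  The generalized semi-infinite cylinder
`Ψ^r = {θ₁ v_r + θ₂ u : u ∈ V^r, θ₁ ≥ 0, θ₂ ∈ [0,1]}`. -/
def cylinderPsi (f : EuclideanSpace ℝ (Fin 3) → ℝ)
    (v : Fin 3 → EuclideanSpace ℝ (Fin 3)) (r : Fin 3) :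
    Set (EuclideanSpace ℝ (Fin 3)) :=
  {w | ∃ (θ₁ θ₂ : ℝ) (u : EuclideanSpace ℝ (Fin 3)),
    u ∈ sliceV f v r ∧ 0 ≤ θ₁ ∧ 0 ≤ θ₂ ∧ θ₂ ≤ 1 ∧ w = θ₁ • v r + θ₂ • u}

/-!
Write `w = ∑ ξ_j z_j = C(w) • v(w)` with `v(w) ∈ V`, and expand everything in the basis of
vertex velocities `v_j = C_j⁻¹ • z_j`, in which `w` has coordinates `ξ_j C_j`.
On the face `ξ_r = 0`, `v(w) ∈ V^r ⊆ Π^r`, so its `v_i`-coordinate `ξ_i C_i / C(w)` is at most 1.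
In the interior, `v(w) ∈ V_s ⊆ Ψ^r` gives `v(w) = θ₁ v_r + θ₂ u` with `u ∈ V^r`, `θ₂ ≤ 1`.
Dropping the `v_r`-components, `C(w) θ₂ u = (1 - ξ_r) x̃_γ = (1 - ξ_r) C(γ) v(γ)`, and since
`V` meets every ray from the origin only once, `C(w) θ₂ = (1 - ξ_r) C(γ)`.
-/

lemma LinearIndependent.coeff_eq_mul_of_sum_smul_eq {R M ι : Type*} [Semiring R]
    [AddCommMonoid M] [Module R M] [Fintype ι] [DecidableEq ι] {v : ι → M}
    (hv : LinearIndependent R v) {α s : ι → R} {r : ι} {a b : R}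
    (h : ∑ j, α j • v j = a • v r + b • ∑ j, s j • v j) {j : ι} (hj : j ≠ r) :
    α j = b * s j := by
  have hsum : a • v r + b • ∑ j, s j • v j = ∑ j, ((if j = r then a else 0) + b * s j) • v j := by
    simp only [add_smul, sum_add_distrib, ite_smul, zero_smul, sum_ite_eq', mem_univ, if_true,
      smul_sum, mul_smul]
  simpa [hj] using Fintype.linearIndependent_iffₛ.1 hv _ _ (h.trans hsum) j

section SpeedProfile

variable {E : Type*} [NormedAddCommGroup E] [InnerProductSpace ℝ E] {f : E → ℝ}

lemma slCost_pos (hf : ∀ a : E, ‖a‖ = 1 → 0 < f a) {w : E} (hw : w ≠ 0) : 0 < slCost f w :=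
  div_pos (norm_pos_iff.2 hw) (hf _ (norm_smul_inv_norm hw))

lemma slCost_nonneg (hf : ∀ a : E, ‖a‖ = 1 → 0 < f a) (w : E) : 0 ≤ slCost f w := by
  rcases eq_or_ne w 0 with rfl | hw
  · simp [slCost]
  · exact (slCost_pos hf hw).le

lemma slVel_eq_inv_slCost_smul (w : E) : slVel f w = (slCost f w)⁻¹ • w := by
  rw [slVel, slCost, smul_smul, inv_div, div_eq_mul_inv]

lemma slCost_smul_slVel (hf : ∀ a : E, ‖a‖ = 1 → 0 < f a) {w : E} (hw : w ≠ 0) :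
    slCost f w • slVel f w = w := by
  rw [slVel_eq_inv_slCost_smul, smul_inv_smul₀ (slCost_pos hf hw).ne']

lemma slVel_mem_speedProfile {w : E} (hw : w ≠ 0) : slVel f w ∈ speedProfile f :=
  ⟨_, norm_smul_inv_norm hw, rfl⟩

lemma eq_of_smul_eq_smul_of_mem_speedProfile (hf : ∀ a : E, ‖a‖ = 1 → 0 < f a) {u v : E}
    (hu : u ∈ speedProfile f) (hv : v ∈ speedProfile f) {s t : ℝ} (hs : 0 ≤ s) (ht : 0 < t)
    (h : s • u = t • v) : s = t := by
  obtain ⟨a, ha, rfl⟩ := hu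
  obtain ⟨b, hb, rfl⟩ := hv
  rw [smul_smul, smul_smul] at h
  have hpos : 0 < t * f b := mul_pos ht (hf b hb)
  have hlen : s * f a = t * f b := by
    simpa [norm_smul, ha, hb, abs_of_nonneg hs, abs_of_pos ht, abs_of_pos (hf a ha),
      abs_of_pos (hf b hb)] using congrArg norm h
  obtain rfl : a = b := smul_right_injective E hpos.ne' (hlen ▸ h)
  exact mul_right_cancel₀ (hf a ha).ne' hlen

variable {ι : Type*} {z : ι → E}

lemma linearIndependent_slVel (hf : ∀ a : E, ‖a‖ = 1 → 0 < f a) (hz : LinearIndependent ℝ z) :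
    LinearIndependent ℝ fun j => slVel f (z j) := by
  have hunit : (fun j => slVel f (z j)) =
      (fun j => Units.mk0 _ (inv_ne_zero (slCost_pos hf (hz.ne_zero j)).ne')) • z :=
    funext fun j => slVel_eq_inv_slCost_smul (z j)
  rw [hunit]
  exact hz.units_smul _

lemma sum_smul_eq_sum_slCost_smul_slVel [Fintype ι] (hf : ∀ a : E, ‖a‖ = 1 → 0 < f a)
    (hz : ∀ j, z j ≠ 0) (ξ : ι → ℝ) : ∑ j, ξ j • z j = ∑ j, (ξ j * slCost f (z j)) • slVel f (z j) := by
  simp only [mul_smul, slCost_smul_slVel hf (hz _)]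

lemma slVel_sum_eq [Fintype ι] (hf : ∀ a : E, ‖a‖ = 1 → 0 < f a) (hz : ∀ j, z j ≠ 0) (ξ : ι → ℝ) :
    slVel f (∑ j, ξ j • z j) =
      ∑ j, ((slCost f (∑ j, ξ j • z j))⁻¹ * (ξ j * slCost f (z j))) • slVel f (z j) := by
  rw [slVel_eq_inv_slCost_smul, smul_sum]
  refine sum_congr rfl fun j _ => ?_
  rw [mul_smul, mul_smul, slCost_smul_slVel hf (hz j)]

end SpeedProfile

section Simplex

variable {f : EuclideanSpace ℝ (Fin 3) → ℝ} {z : Fin 3 → EuclideanSpace ℝ (Fin 3)}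

lemma slVel_sum_mem_sectorVs (hf : ∀ a : EuclideanSpace ℝ (Fin 3), ‖a‖ = 1 → 0 < f a)
    (hz : ∀ j, z j ≠ 0) {ξ : Fin 3 → ℝ} (hξ : ∀ j, 0 ≤ ξ j) (hw : ∑ j, ξ j • z j ≠ 0) :
    slVel f (∑ j, ξ j • z j) ∈ sectorVs f fun j => slVel f (z j) :=
  ⟨slVel_mem_speedProfile hw, _, fun j => mul_nonneg (inv_nonneg.2 (slCost_nonneg hf _))
    (mul_nonneg (hξ j) (slCost_nonneg hf _)), slVel_sum_eq hf hz ξ⟩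

lemma slVel_sum_mem_sliceV (hf : ∀ a : EuclideanSpace ℝ (Fin 3), ‖a‖ = 1 → 0 < f a)
    (hz : ∀ j, z j ≠ 0) {ξ : Fin 3 → ℝ} (hξ : ∀ j, 0 ≤ ξ j) {r : Fin 3} (hξr : ξ r = 0)
    (hw : ∑ j, ξ j • z j ≠ 0) :
    slVel f (∑ j, ξ j • z j) ∈ sliceV f (fun j => slVel f (z j)) r :=
  ⟨slVel_mem_speedProfile hw, _, by simp [hξr], fun j => mul_nonneg
    (inv_nonneg.2 (slCost_nonneg hf _)) (mul_nonneg (hξ j) (slCost_nonneg hf _)),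
    slVel_sum_eq hf hz ξ⟩

lemma mul_slCost_le_of_sectorVs_subset_cylinderPsi
    (hf : ∀ a : EuclideanSpace ℝ (Fin 3), ‖a‖ = 1 → 0 < f a) (hz : LinearIndependent ℝ z)
    {r : Fin 3}
    (hPsi : sectorVs f (fun j => slVel f (z j)) ⊆ cylinderPsi f (fun j => slVel f (z j)) r)
    {ξ γ : Fin 3 → ℝ} {c : ℝ} (hc : 0 < c) (hξ : ∀ j, 0 < ξ j) (hγr : γ r = 0)
    (hξγ : ∀ j, j ≠ r → ξ j = c * γ j) :
    c * slCost f (∑ j, γ j • z j) ≤ slCost f (∑ j, ξ j • z j) := by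
  have hw : ∑ j, ξ j • z j ≠ 0 := fun h =>
    (hξ r).ne' (Fintype.linearIndependent_iff.1 hz ξ h r)
  obtain ⟨i, hir⟩ := exists_ne r
  have hw' : ∑ j, γ j • z j ≠ 0 := fun h =>
    (hξ i).ne' (by rw [hξγ i hir, Fintype.linearIndependent_iff.1 hz γ h i, mul_zero])
  obtain ⟨θ₁, θ₂, u, ⟨hu, s, hsr, -, rfl⟩, -, hθ₂, hθ₂₁, hvw⟩ :=
    hPsi (slVel_sum_mem_sectorVs hf hz.ne_zero (fun j => (hξ j).le) hw)
  set C := slCost f (∑ j, ξ j • z j)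
  have hcoeff : ∀ j, j ≠ r → ξ j * slCost f (z j) = C * θ₂ * s j := fun j hj =>
    (linearIndependent_slVel hf hz).coeff_eq_mul_of_sum_smul_eq (a := C * θ₁) (s := s)
      ((sum_smul_eq_sum_slCost_smul_slVel hf hz.ne_zero ξ).symm.trans <|
        (slCost_smul_slVel hf hw).symm.trans <| by rw [hvw, smul_add, smul_smul, smul_smul]) hj
  have hscale : (C * θ₂) • ∑ j, s j • slVel f (z j) =
      (c * slCost f (∑ j, γ j • z j)) • slVel f (∑ j, γ j • z j) := by
    rw [mul_smul c, slCost_smul_slVel hf hw', sum_smul_eq_sum_slCost_smul_slVel hf hz.ne_zero,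
      smul_sum, smul_sum]
    refine sum_congr rfl fun j _ => ?_
    rw [smul_smul, smul_smul]
    congr 1
    rcases eq_or_ne j r with rfl | hj
    · simp [hsr, hγr]
    · rw [← hcoeff j hj, hξγ j hj]
      ring
  have hC : C * θ₂ = c * slCost f (∑ j, γ j • z j) :=
    eq_of_smul_eq_smul_of_mem_speedProfile hf hu (slVel_mem_speedProfile hw')
      (mul_nonneg (slCost_nonneg hf _) hθ₂) (mul_pos hc (slCost_pos hf hw')) hscale
  rw [← hC]
  exact mul_le_of_le_one_right (slCost_nonneg hf _) hθ₂₁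

lemma mul_slCost_le_of_sliceV_subset_parallelogram
    (hf : ∀ a : EuclideanSpace ℝ (Fin 3), ‖a‖ = 1 → 0 < f a) (hz : LinearIndependent ℝ z)
    {r : Fin 3}
    (hPi : sliceV f (fun j => slVel f (z j)) r ⊆ parallelogram (fun j => slVel f (z j)) r)
    {ξ : Fin 3 → ℝ} (hξ : ∀ j, 0 ≤ ξ j) (hξr : ξ r = 0) {i : Fin 3} (hξi : 0 < ξ i) :
    ξ i * slCost f (z i) ≤ slCost f (∑ j, ξ j • z j) := by
  have hw : ∑ j, ξ j • z j ≠ 0 := fun h =>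
    hξi.ne' (Fintype.linearIndependent_iff.1 hz ξ h i)
  obtain ⟨θ, -, hθ, hvw⟩ := hPi (slVel_sum_mem_sliceV hf hz.ne_zero hξ hξr hw)
  have hθi := Fintype.linearIndependent_iffₛ.1 (linearIndependent_slVel hf hz) _ _
    (hvw.symm.trans (slVel_sum_eq hf hz.ne_zero ξ)) i
  have h := (hθ i).2
  rwa [hθi, inv_mul_le_iff₀ (slCost_pos hf hw), mul_one] at h

end Simplex

theorem stmt10_general (z : Fin 3 → EuclideanSpace ℝ (Fin 3))
    (hz : LinearIndependent ℝ z)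
    (f : EuclideanSpace ℝ (Fin 3) → ℝ)
    (hfpos : ∀ a : EuclideanSpace ℝ (Fin 3), ‖a‖ = 1 → 0 < f a)
    (hPsi : ∀ r : Fin 3, sectorVs f (fun j => slVel f (z j)) ⊆
      cylinderPsi f (fun j => slVel f (z j)) r)
    (hPi : ∀ r : Fin 3, sliceV f (fun j => slVel f (z j)) r ⊆
      parallelogram (fun j => slVel f (z j)) r) :
    (∀ ξ : Fin 3 → ℝ, (∀ j, 0 < ξ j) → ∑ j, ξ j = 1 →
      ∀ r : Fin 3,
        (1 - ξ r) *
            slCost f (∑ j, (if j = r then 0 else ξ j / (1 - ξ r)) • z j) ≤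
          slCost f (∑ j, ξ j • z j)) ∧
    (∀ ξ : Fin 3 → ℝ, (∀ j, 0 ≤ ξ j) → ∑ j, ξ j = 1 →
      ∀ r : Fin 3, ξ r = 0 → (∀ i, i ≠ r → 0 < ξ i) →
        ∀ i, i ≠ r → ξ i * slCost f (z i) ≤ slCost f (∑ j, ξ j • z j)) := by
  refine ⟨fun ξ hξ hsum r => ?_, fun ξ hξ _ r hξr hpos i hir =>
    mul_slCost_le_of_sliceV_subset_parallelogram hfpos hz (hPi r) hξ hξr (hpos i hir)⟩
  have hr : 0 < 1 - ξ r := by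
    rw [Fin.sum_univ_three] at hsum
    fin_cases r <;> simp only [Fin.zero_eta, Fin.mk_one, Fin.reduceFinMk, Fin.isValue, sub_pos] <;>
      linarith [hξ 0, hξ 1, hξ 2]
  refine mul_slCost_le_of_sectorVs_subset_cylinderPsi hfpos hz (hPsi r) hr hξ (if_pos rfl)
    fun j hj => ?_
  rw [if_neg hj, mul_div_cancel₀ _ hr.ne']

/-- Causality condition on `V` in `ℝ³`.
If the speed profile is convex, `V_s ⊆ Ψ¹ ∩ Ψ² ∩ Ψ³`, and `V^r ⊆ Π^r` for each
`r`, then the simplex `(x = 0, z₁, z₂, z₃)` is monotone causal: in the interior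
of `Ξ₃`, `C(ξ) ≥ (1−ξ_r)·C(γ_r)` for every oblique projection `γ_r`, and on each
face `ξ_r = 0` one has `C(ξ) ≥ ξ_i C_i` for the two active coordinates. -/
theorem stmt10 (z : Fin 3 → EuclideanSpace ℝ (Fin 3))
    (hz : LinearIndependent ℝ z)
    (f : EuclideanSpace ℝ (Fin 3) → ℝ)
    (hfc : ContinuousOn f (Metric.sphere (0 : EuclideanSpace ℝ (Fin 3)) 1))
    (hfpos : ∀ a : EuclideanSpace ℝ (Fin 3), ‖a‖ = 1 → 0 < f a)
    (hVconv : Convex ℝ (speedBody f))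
    (hPsi : ∀ r : Fin 3, sectorVs f (fun j => slVel f (z j)) ⊆
      cylinderPsi f (fun j => slVel f (z j)) r)
    (hPi : ∀ r : Fin 3, sliceV f (fun j => slVel f (z j)) r ⊆
      parallelogram (fun j => slVel f (z j)) r) :
    (∀ ξ : Fin 3 → ℝ, (∀ j, 0 < ξ j) → ∑ j, ξ j = 1 →
      ∀ r : Fin 3,
        (1 - ξ r) *
            slCost f (∑ j, (if j = r then 0 else ξ j / (1 - ξ r)) • z j) ≤
          slCost f (∑ j, ξ j • z j)) ∧
    (∀ ξ : Fin 3 → ℝ, (∀ j, 0 ≤ ξ j) → ∑ j, ξ j = 1 →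
      ∀ r : Fin 3, ξ r = 0 → (∀ i, i ≠ r → 0 < ξ i) →
        ∀ i, i ≠ r → ξ i * slCost f (z i) ≤ slCost f (∑ j, ξ j • z j)) :=
  stmt10_general z hz f hfpos hPsi hPi
end

section
/- In the isotropic case f(a) ≡ f > 0 with m = 2, let β ∈ (0, π/2) be the angle between z_1 and z_2. Then the quantities of the maximal-δ formula satisfy δ_1 = C_2·cos β = (|z_2|/f)·cos β and δ_2 = C_1·cos β = (|z_1|/f)·cos β, so the maximal bucket width for which the simplex is monotone δ-causal is Δ = (min(|z_1|, |z_2|)/f)·cos β. In particular, for the 8-point stencil with |z_1| = h, |z_2| = h√2 and β = π/4, one gets Δ = h/(f√2). -/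
open scoped RealInnerProductSpace

open InnerProductGeometry

section

variable {E : Type*} [NormedAddCommGroup E] [InnerProductSpace ℝ E]

theorem inner_isotropic_velocity_ratio_eq_cos_angle {x : E} (hx : x ≠ 0) (y : E) {f : ℝ}
    (hf : f ≠ 0) :
    ⟪(f / ‖y‖) • y, ‖x‖⁻¹ • x⟫ / ⟪(f / ‖x‖) • x, ‖x‖⁻¹ • x⟫ = Real.cos (angle x y) := by
  have hx' : ‖x‖ ≠ 0 := norm_ne_zero_iff.mpr hx
  have hdenom : ⟪(f / ‖x‖) • x, ‖x‖⁻¹ • x⟫ = f := by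
    rw [real_inner_smul_left, real_inner_smul_right, real_inner_self_eq_norm_sq]
    field_simp
  rw [hdenom, cos_angle, real_inner_smul_left, real_inner_smul_right, real_inner_comm]
  field_simp

end

theorem min_mul_div_eq_min_div_mul {α : Type*} [Field α] [LinearOrder α] [IsStrictOrderedRing α]
    {a b f c : α} (hf : 0 ≤ f) (hc : 0 ≤ c) :
    min (b / f * c) (a / f * c) = min a b / f * c := by
  rw [min_comm, ← min_mul_of_nonneg _ _ hc, min_div_div_right hf]

theorem stmt14_general (z₁ z₂ : EuclideanSpace ℝ (Fin 2))
    (hz₁ : z₁ ≠ 0) (hz₂ : z₂ ≠ 0)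
    (f : ℝ) (hf : 0 < f)
    (β : ℝ) (hβ : β = InnerProductGeometry.angle z₁ z₂)
    (hβπ : β < Real.pi / 2) :
    (‖z₂‖ / f) * (⟪(f / ‖z₂‖) • z₂, ‖z₁‖⁻¹ • z₁⟫ / ⟪(f / ‖z₁‖) • z₁, ‖z₁‖⁻¹ • z₁⟫)
        = (‖z₂‖ / f) * Real.cos β ∧
    (‖z₁‖ / f) * (⟪(f / ‖z₁‖) • z₁, ‖z₂‖⁻¹ • z₂⟫ / ⟪(f / ‖z₂‖) • z₂, ‖z₂‖⁻¹ • z₂⟫)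
        = (‖z₁‖ / f) * Real.cos β ∧
    min ((‖z₂‖ / f) * Real.cos β) ((‖z₁‖ / f) * Real.cos β)
        = (min ‖z₁‖ ‖z₂‖ / f) * Real.cos β ∧
    (∀ h : ℝ, 0 < h → ‖z₁‖ = h → ‖z₂‖ = h * Real.sqrt 2 → β = Real.pi / 4 →
      min ((‖z₂‖ / f) * Real.cos β) ((‖z₁‖ / f) * Real.cos β)
        = h / (f * Real.sqrt 2)) := by
  have hcos : 0 ≤ Real.cos β := Real.cos_nonneg_of_neg_pi_div_two_le_of_le
    (by linarith [hβ ▸ angle_nonneg z₁ z₂, Real.pi_pos]) hβπ.le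
  have hmin := min_mul_div_eq_min_div_mul (a := ‖z₁‖) (b := ‖z₂‖) hf.le hcos
  refine ⟨?_, ?_, hmin, ?_⟩
  · rw [inner_isotropic_velocity_ratio_eq_cos_angle hz₁ z₂ hf.ne', hβ]
  · rw [inner_isotropic_velocity_ratio_eq_cos_angle hz₂ z₁ hf.ne', angle_comm, hβ]
  · intro h hh hz₁h hz₂h hβ4
    have hsqrt : 1 ≤ Real.sqrt 2 := Real.one_le_sqrt.mpr one_le_two
    rw [hmin, hz₁h, hz₂h, min_eq_left (le_mul_of_one_le_right hh.le hsqrt), hβ4,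
      Real.cos_pi_div_four]
    field_simp
    rw [Real.sq_sqrt zero_le_two]

/-- Maximal bucket width in the isotropic 2D case.
With isotropic speed `f > 0`, velocities `v_j = f·z_j/|z_j|`, outward normals
`n_j = z_j/|z_j|`, costs `C_j = |z_j|/f`, and `β ∈ (0, π/2)` the angle between
`z₁` and `z₂`, the quantities of the maximal-δ formula satisfy
`δ₁ = C₂·(v₂·n̂₁)/(v₁·n̂₁) = (|z₂|/f)·cos β`, `δ₂ = (|z₁|/f)·cos β`, hence
`Δ = min(δ₁, δ₂) = (min(|z₁|,|z₂|)/f)·cos β`; in particular, for the 8-point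
stencil with `|z₁| = h`, `|z₂| = h√2`, `β = π/4`, one gets `Δ = h/(f√2)`. -/
theorem stmt14 (z₁ z₂ : EuclideanSpace ℝ (Fin 2))
    (hz₁ : z₁ ≠ 0) (hz₂ : z₂ ≠ 0)
    (f : ℝ) (hf : 0 < f)
    (β : ℝ) (hβ : β = InnerProductGeometry.angle z₁ z₂)
    (hβ0 : 0 < β) (hβπ : β < Real.pi / 2) :
    (‖z₂‖ / f) * (⟪(f / ‖z₂‖) • z₂, ‖z₁‖⁻¹ • z₁⟫ / ⟪(f / ‖z₁‖) • z₁, ‖z₁‖⁻¹ • z₁⟫)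
        = (‖z₂‖ / f) * Real.cos β ∧
    (‖z₁‖ / f) * (⟪(f / ‖z₁‖) • z₁, ‖z₂‖⁻¹ • z₂⟫ / ⟪(f / ‖z₂‖) • z₂, ‖z₂‖⁻¹ • z₂⟫)
        = (‖z₁‖ / f) * Real.cos β ∧
    min ((‖z₂‖ / f) * Real.cos β) ((‖z₁‖ / f) * Real.cos β)
        = (min ‖z₁‖ ‖z₂‖ / f) * Real.cos β ∧
    (∀ h : ℝ, 0 < h → ‖z₁‖ = h → ‖z₂‖ = h * Real.sqrt 2 → β = Real.pi / 4 →
      min ((‖z₂‖ / f) * Real.cos β) ((‖z₁‖ / f) * Real.cos β)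
        = h / (f * Real.sqrt 2)) :=
  stmt14_general z₁ z₂ hz₁ hz₂ f hf β hβ hβπ
end

section
/- Let α, D > 0, let g, g_1, g_2 > 0 with g_2 > g_1, and set p̃ = 1 − e^{−αD}. Define the lane-change costs K(0) = g, K(p̃) = g + p̃·g_1, and K(1) = g + g_1 + (1−p̃)·g_2. If g ≥ α·D·g_2, then g ≥ p̃·g_2 (using the convexity inequality 1 − e^{−αD} ≤ αD), and consequently K(p̃) ≥ p̃·K(1); together with the monotonicity K(0) ≤ K(p̃) ≤ K(1), this is the monotone-causality condition C(ξ) ≥ ξ_1 C_1 and C(ξ) ≥ ξ_2 C_2 (with δ = 0) for the lane-change mode, so a Dijkstra-like method is applicable to this OSSP. -/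
/-- Monotone causality of the lane-change model of Jones,
Haas-Heger, and van den Berg.  With `p̃ = 1 − e^{−αD}`, lane-change costs
`K(0) = g`, `K(p̃) = g + p̃g₁`, `K(1) = g + g₁ + (1 − p̃)g₂`, and the condition
`g ≥ αDg₂`, one has `g ≥ p̃g₂` (via the convexity inequality `1 − e^{−αD} ≤ αD`),
and the monotone-causality condition `K(p) ≥ (1−p)K(0)` and `K(p) ≥ pK(1)` holds
for all available `p ∈ {0, p̃, 1}`, so a Dijkstra-like method is applicable. -/
theorem stmt15 (α D g g₁ g₂ : ℝ)
    (hα : 0 < α) (hD : 0 < D) (hg : 0 < g) (hg₁ : 0 < g₁) (hg₁₂ : g₁ < g₂)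
    (K : ℝ → ℝ)
    (hK0 : K 0 = g)
    (hKp : K (1 - Real.exp (-(α * D))) = g + (1 - Real.exp (-(α * D))) * g₁)
    (hK1 : K 1 = g + g₁ + (1 - (1 - Real.exp (-(α * D)))) * g₂)
    (hcond : α * D * g₂ ≤ g) :
    (1 - Real.exp (-(α * D))) * g₂ ≤ g ∧
    ∀ p ∈ ({0, 1 - Real.exp (-(α * D)), 1} : Set ℝ),
      (1 - p) * K 0 ≤ K p ∧ p * K 1 ≤ K p := by
  have he : Real.exp (-(α * D)) ≤ 1 := by
    rw [Real.exp_le_one_iff]; nlinarith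
  have hep : 0 < Real.exp (-(α * D)) := Real.exp_pos _
  have hle : 1 - Real.exp (-(α * D)) ≤ α * D := by
    have := Real.add_one_le_exp (-(α * D)); linarith
  have hmain : (1 - Real.exp (-(α * D))) * g₂ ≤ g := by nlinarith
  refine ⟨hmain, ?_⟩
  intro p hp
  rcases hp with h | h | h <;> subst h
  · simp [hK0]; positivity
  · constructor
    · rw [hK0, hKp]; nlinarith
    · rw [hK1, hKp]; nlinarith
  · constructor
    · simp [hK0]; rw [hK1]; nlinarith
    · simp
end

section
/- Let C(ξ) = ‖ξ‖_2 = √(ξ_1² + ξ_2² + ξ_3²) on the probability simplex Ξ_3. For every ξ ∈ Ξ_3 and every r ∈ {1,2,3} with 0 < ξ_r < 1, letting γ_r be the oblique projection (γ_{r,r} = 0, γ_{r,j} = ξ_j/(1−ξ_r) for j ≠ r), one has C(ξ)² − ((1−ξ_r)·C(γ_r))² = ξ_r², hence C(ξ) > (1−ξ_r)·C(γ_r), so C satisfies the (improved) monotone causality condition with δ = 0. In contrast, the simplified condition C(ξ) ≥ Σ_{j≠r} ξ_j (which uses deterministic costs C_j = C(e_j) = 1) fails on part of Ξ_3, e.g.,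 at ξ = (1/3, 1/3, 1/3), where ‖ξ‖_2 = 1/√3 < 2/3. -/
open Finset

/-- The Euclidean norm cost on `Ξ₃` is monotone causal via the
improved condition but not via the simplified one.  For `C(ξ) = ‖ξ‖₂` on the
probability simplex `Ξ₃` and any `r` with `0 < ξ_r < 1`, the oblique projection
`γ_r` satisfies `C(ξ)² − ((1−ξ_r)C(γ_r))² = ξ_r²`, hence
`C(ξ) > (1−ξ_r)C(γ_r)` (the improved monotone causality condition with `δ = 0`);
in contrast, the simplified condition `C(ξ) ≥ Σ_{j≠r} ξ_j` fails on part of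
`Ξ₃`, e.g. at `ξ = (1/3, 1/3, 1/3)`, where `‖ξ‖₂ = 1/√3 < 2/3`. -/
theorem stmt18 :
    (∀ ξ ∈ stdSimplex ℝ (Fin 3), ∀ r : Fin 3, 0 < ξ r → ξ r < 1 →
      (Real.sqrt (∑ j, ξ j ^ 2)) ^ 2 -
          ((1 - ξ r) *
            Real.sqrt (∑ j, (if j = r then 0 else ξ j / (1 - ξ r)) ^ 2)) ^ 2
        = ξ r ^ 2 ∧
      (1 - ξ r) * Real.sqrt (∑ j, (if j = r then 0 else ξ j / (1 - ξ r)) ^ 2)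
        < Real.sqrt (∑ j, ξ j ^ 2)) ∧
    ¬ (∀ ξ ∈ stdSimplex ℝ (Fin 3), ∀ r : Fin 3,
        (∑ j ∈ Finset.univ.erase r, ξ j) ≤ Real.sqrt (∑ j, ξ j ^ 2)) ∧
    Real.sqrt (∑ _j : Fin 3, ((1:ℝ) / 3) ^ 2) < 2 / 3 := by
  have h13 : Real.sqrt (∑ _j : Fin 3, ((1:ℝ) / 3) ^ 2) < 2 / 3 := by
    have : (∑ _j : Fin 3, ((1:ℝ) / 3) ^ 2) = 1 / 3 := by
      simp [Fin.sum_univ_three]; norm_num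
    rw [this]
    rw [show (2:ℝ)/3 = Real.sqrt ((2/3)^2) by rw [Real.sqrt_sq (by norm_num)]]
    apply Real.sqrt_lt_sqrt (by norm_num) (by norm_num)
  refine ⟨?_, ?_, h13⟩
  · intro ξ hξ r hr0 hr1
    have h1 : (0:ℝ) < 1 - ξ r := by linarith
    have hS : (0:ℝ) ≤ ∑ j, ξ j ^ 2 := Finset.sum_nonneg fun j _ => sq_nonneg _
    have hT : (0:ℝ) ≤ ∑ j, (if j = r then 0 else ξ j / (1 - ξ r)) ^ 2 :=
      Finset.sum_nonneg fun j _ => by positivity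
    have hrS : ξ r ^ 2 ≤ ∑ j, ξ j ^ 2 :=
      Finset.single_le_sum (f := fun j => ξ j ^ 2) (fun i _ => sq_nonneg _) (mem_univ r)
    have hTval : ∑ j, (if j = r then 0 else ξ j / (1 - ξ r)) ^ 2
        = ((∑ j, ξ j ^ 2) - ξ r ^ 2) / (1 - ξ r) ^ 2 := by
      fin_cases r <;> simp [Fin.sum_univ_three] <;> field_simp <;> try ring
    have hmul : (1 - ξ r) ^ 2 * ((∑ j, ξ j ^ 2 - ξ r ^ 2) / (1 - ξ r) ^ 2)
        = ∑ j, ξ j ^ 2 - ξ r ^ 2 := by field_simp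
    constructor
    · rw [Real.sq_sqrt hS, mul_pow, Real.sq_sqrt hT, hTval, hmul]
      ring
    · have heq : Real.sqrt ((∑ j, ξ j ^ 2) - ξ r ^ 2)
          = (1 - ξ r) * Real.sqrt (∑ j, (if j = r then 0 else ξ j / (1 - ξ r)) ^ 2) := by
        conv_lhs => rw [← hmul]
        rw [Real.sqrt_mul (sq_nonneg _), Real.sqrt_sq h1.le, ← hTval]
      rw [← heq]
      apply Real.sqrt_lt_sqrt (by linarith)
      nlinarith [sq_nonneg (ξ r)]
  · intro h
    have hmem : (fun _ : Fin 3 => (1:ℝ)/3) ∈ stdSimplex ℝ (Fin 3) := by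
      constructor
      · intro i; norm_num
      · norm_num [Fin.sum_univ_three]
    have := h (fun _ => 1/3) hmem 0
    rw [Finset.sum_erase_eq_sub (mem_univ 0)] at this
    norm_num [Fin.sum_univ_three] at this h13
    linarith
end
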